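/- arXiv:1411.0737 — 7 statements merged into one kernel-verified Lean document; each statement's English description precedes it below -/
import Mathlib

section
/- The function H(z) = −z·Log z is injective on D_{e^{−1},π}, i.e. on the set {z ∈ ℂ : 0 < |z| < e^{−1} and z ∉ ℝ≤0}. -/
/-- The domain `D_{s,α} = {z ∈ ℂ : 0 < |z| < s and |Arg z| < α}`. -/
def Ddom (s α : ℝ) : Set ℂ :=
  {z : ℂ | 0 < ‖z‖ ∧ ‖z‖ < s ∧ |Complex.arg z| < α}

/-!
Substituting `w = -Log z` maps `D_{e⁻¹,π}` into the half-strip `1 < Re w, |Im w| < π`, and there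
`H z = w e^{-w} = exp (Log w - w)`. On this half-strip `|Im (Log w - w)| < π`, so `exp` is injective
on the values of `Log w - w`, and `w ↦ Log w - w` is injective because `Log` is a strict
contraction on `1 < Re w` (its derivative `1/w` has modulus `< 1` there).
-/

open Complex Set

namespace Complex

theorem norm_log_sub_log_le {m : ℝ} (hm : 0 < m) {w₁ w₂ : ℂ} (h₁ : m ≤ w₁.re) (h₂ : m ≤ w₂.re) :
    ‖log w₁ - log w₂‖ ≤ m⁻¹ * ‖w₁ - w₂‖ := by
  have hslit : ∀ w ∈ {w : ℂ | m ≤ w.re}, w ∈ slitPlane := fun w hw ↦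
    mem_slitPlane_iff.mpr (Or.inl (hm.trans_le hw))
  refine (convex_halfSpace_re_ge m).norm_image_sub_le_of_norm_deriv_le
    (fun w hw ↦ differentiableAt_log (hslit w hw)) (fun w hw ↦ ?_) h₂ h₁
  rw [deriv_log (hslit w hw), norm_inv]
  exact inv_anti₀ hm (hw.trans (re_le_norm w))

theorem injOn_log_sub_self : InjOn (fun w ↦ log w - w) {w : ℂ | 1 < w.re} := by
  intro w₁ (h₁ : 1 < w₁.re) w₂ (h₂ : 1 < w₂.re) heq
  set m := min w₁.re w₂.re
  have hm : 1 < m := lt_min h₁ h₂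
  have hlog : log w₁ - log w₂ = w₁ - w₂ := by linear_combination heq
  have hle := norm_log_sub_log_le (by linarith) (min_le_left w₁.re w₂.re) (min_le_right w₁.re w₂.re)
  rw [hlog] at hle
  by_contra hne
  have hpos : 0 < ‖w₁ - w₂‖ := norm_pos_iff.mpr (sub_ne_zero.mpr hne)
  have := (mul_lt_iff_lt_one_left hpos).mpr (inv_lt_one_of_one_lt₀ hm)
  linarith

theorem abs_im_log_sub_self_lt_pi {w : ℂ} (hre : 0 < w.re) (him : |w.im| < Real.pi) :
    |(log w - w).im| < Real.pi := by
  rw [sub_im, log_im]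
  -- `arg w` has the sign of `Im w` and modulus `< π/2`, so it cannot push `Im w` out of `(-π, π)`
  have harg := abs_lt.mp (abs_arg_lt_pi_div_two_iff.mpr (Or.inl hre))
  have hpi := Real.pi_pos
  rcases le_or_gt 0 w.im with h | h
  · have := arg_nonneg_iff.mpr h
    rw [abs_lt]; constructor <;> linarith [abs_lt.mp him]
  · have := arg_neg_iff.mpr h
    rw [abs_lt]; constructor <;> linarith [abs_lt.mp him]

theorem mul_exp_neg_eq_exp_log_sub_self {w : ℂ} (hw : w ≠ 0) : w * exp (-w) = exp (log w - w) := by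
  rw [sub_eq_add_neg, exp_add, exp_log hw]

theorem injOn_mul_exp_neg :
    InjOn (fun w ↦ w * exp (-w)) {w : ℂ | 1 < w.re ∧ |w.im| < Real.pi} := by
  rintro w₁ ⟨hre₁, him₁⟩ w₂ ⟨hre₂, him₂⟩ heq
  have hstrip : ∀ {w : ℂ}, 1 < w.re → |w.im| < Real.pi → log (exp (log w - w)) = log w - w :=
    fun hre him ↦ by
      obtain ⟨hl, hr⟩ := abs_lt.mp (abs_im_log_sub_self_lt_pi (by linarith) him)
      exact log_exp hl hr.le
  simp only [mul_exp_neg_eq_exp_log_sub_self (ne_zero_of_one_lt_re hre₁),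
    mul_exp_neg_eq_exp_log_sub_self (ne_zero_of_one_lt_re hre₂)] at heq
  refine injOn_log_sub_self hre₁ hre₂ (?_ : log w₁ - w₁ = log w₂ - w₂)
  rw [← hstrip hre₁ him₁, ← hstrip hre₂ him₂, heq]

end Complex

theorem neg_log_mem_of_mem_Ddom {r α : ℝ} {z : ℂ} (hz : z ∈ Ddom (Real.exp (-r)) α) :
    r < (-log z).re ∧ |(-log z).im| < α := by
  obtain ⟨hpos, hlt, harg⟩ := hz
  refine ⟨?_, by simpa [log_im, abs_neg] using harg⟩
  have : Real.log ‖z‖ < -r := (Real.log_lt_iff_lt_exp hpos).mpr hlt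
  simp only [neg_re, log_re]
  linarith

/-- The function `H(z) = −z·Log z` is injective on `D_{e⁻¹, π}`. -/
theorem stmt_2 :
    Set.InjOn (fun z : ℂ => -z * Complex.log z) (Ddom (Real.exp (-1)) Real.pi) := by
  intro z₁ hz₁ z₂ hz₂ heq
  have hexp : ∀ {z : ℂ}, z ∈ Ddom (Real.exp (-1)) Real.pi → exp (-(-log z)) = z :=
    fun hz ↦ by rw [neg_neg, exp_log (norm_pos_iff.mp hz.1)]
  have hlog : -log z₁ = -log z₂ := by
    refine injOn_mul_exp_neg (neg_log_mem_of_mem_Ddom hz₁) (neg_log_mem_of_mem_Ddom hz₂) ?_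
    simp only [hexp hz₁, hexp hz₂]
    linear_combination heq
  rw [← hexp hz₁, ← hexp hz₂, hlog]
end

section
/- Let s > 0, α ∈ (0,π], and let ψ be analytic on D_{s,α} with ψ(z)/(−z·Log z) → 1 as z → 0 within D_{s,α}. Then for every β ∈ (0,α) there exist ρ ∈ (0,s) and ρ′ > 0 such that every point y ∈ D_{ρ′,β} has exactly one preimage under ψ in D_{ρ,α}, i.e. there is a unique z ∈ D_{ρ,α} with ψ(z) = y. -/
open Filter Topology

/-! In logarithmic coordinates `z = exp w` the asymptotics say
`ψ (exp w) = exp (w + log (-w) + g w)` with `g` holomorphic and uniformly small on a half-strip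
`Re w < L, |Im w| < α`, so solving `ψ z = y` amounts to the fixed-point equation
`w = log y - log (-w) - g w`. Far to the left, `log (-w)` has derivative `1 / w` and `g` has a small
derivative by Cauchy's estimate, so `w ↦ log (-w) + g w` is a contraction: Banach's theorem on a
box around `log y` gives a solution, and `w ↦ w + log (-w) + g w` is injective. Any solution of
`ψ (exp w) = y` satisfies `w + log (-w) + g w = log y + 2πin`, and comparing imaginary parts
forces `n = 0`. -/

open Complex Set Metric
open scoped Real

theorem Complex.abs_arg_le_abs_im_div_re {w : ℂ} (hw : 0 < w.re) : |arg w| ≤ |w.im| / w.re := by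
  have harg : |arg w| < π / 2 := abs_arg_lt_pi_div_two_iff.2 (Or.inl hw)
  have htan : |arg w| ≤ |Real.tan (arg w)| := by
    rcases le_or_gt 0 (arg w) with h | h
    · rw [abs_of_nonneg h] at harg ⊢
      exact (Real.le_tan h harg).trans (le_abs_self _)
    · rw [abs_of_neg h] at harg ⊢
      calc -arg w ≤ Real.tan (-arg w) := Real.le_tan (by linarith) harg
        _ ≤ |Real.tan (arg w)| := by rw [Real.tan_neg]; exact neg_le_abs _
  rwa [tan_arg, abs_div, abs_of_pos hw] at htan

theorem Real.log_le_div_eight_add_two {t : ℝ} (ht : 0 < t) : Real.log t ≤ t / 8 + 2 := by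
  have hsplit : Real.log t = Real.log (t / 8) + 3 * Real.log 2 := by
    have h8 : Real.log 8 = 3 * Real.log 2 := by
      rw [show (8 : ℝ) = 2 ^ 3 by norm_num, Real.log_pow, Nat.cast_ofNat]
    rw [← h8, ← Real.log_mul (by positivity) (by norm_num), div_mul_cancel₀ t (by norm_num)]
  linarith [Real.log_le_sub_one_of_pos (show 0 < t / 8 by positivity), Real.log_two_lt_d9]

theorem LipschitzOnWith.exists_isFixedPt {X : Type*} [MetricSpace X] {f : X → X} {s : Set X}
    {K : NNReal} (hf : LipschitzOnWith K f s) (hK : K < 1) (hs : IsComplete s)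
    (hfs : MapsTo f s s) (hne : s.Nonempty) : ∃ y ∈ s, Function.IsFixedPt f y := by
  obtain ⟨x, hx⟩ := hne
  obtain ⟨y, hy, hfix, -⟩ :=
    ContractingWith.exists_fixedPoint' hs hfs ⟨hK, hf.mapsToRestrict hfs⟩ hx (edist_ne_top _ _)
  exact ⟨y, hy, hfix⟩

theorem LipschitzOnWith.injOn_add_self {E : Type*} [NormedAddCommGroup E] {h : E → E}
    {s : Set E} {K : NNReal} (hh : LipschitzOnWith K h s) (hK : K < 1) :
    InjOn (fun w => w + h w) s := by
  intro w₁ h₁ w₂ h₂ heq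
  replace heq : w₁ + h w₁ = w₂ + h w₂ := heq
  have hK' : (K : ℝ) < 1 := hK
  have hdist : dist w₁ w₂ ≤ K * dist w₁ w₂ := by
    calc dist w₁ w₂ = dist (h w₂) (h w₁) := by
          rw [dist_eq_norm, dist_eq_norm]
          congr 1
          rw [← sub_eq_zero]
          linear_combination (norm := abel_nf) heq
      _ ≤ K * dist w₂ w₁ := hh.dist_le_mul w₂ h₂ w₁ h₁
      _ = K * dist w₁ w₂ := by rw [dist_comm]
  exact dist_le_zero.1 (by nlinarith [dist_nonneg (x := w₁) (y := w₂)])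

def halfStrip (L a : ℝ) : Set ℂ := {w : ℂ | w.re < L ∧ |w.im| < a}

section HalfStrip

variable {L L' a a' r : ℝ} {w z : ℂ}

theorem halfStrip_subset (hL : L' ≤ L) (ha : a' ≤ a) : halfStrip L' a' ⊆ halfStrip L a :=
  fun _ hw => ⟨hw.1.trans_le hL, hw.2.trans_le ha⟩

theorem convex_halfStrip (L a : ℝ) : Convex ℝ (halfStrip L a) := by
  have hset : halfStrip L a = {w : ℂ | w.re < L} ∩ ({w : ℂ | -a < w.im} ∩ {w : ℂ | w.im < a}) := by
    ext w
    simp only [halfStrip, mem_ofPred_eq, mem_inter_iff, abs_lt]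
  rw [hset]
  exact (convex_halfSpace_re_lt L).inter
    ((convex_halfSpace_im_gt _).inter (convex_halfSpace_im_lt _))

theorem ball_subset_halfStrip (hL : L' + r ≤ L) (ha : a' + r ≤ a) (hw : w ∈ halfStrip L' a') :
    ball w r ⊆ halfStrip L a := by
  intro v hv
  rw [mem_ball, dist_eq_norm] at hv
  have hre : |v.re - w.re| < r := by rw [← sub_re]; exact (abs_re_le_norm _).trans_lt hv
  have him : |v.im - w.im| < r := by rw [← sub_im]; exact (abs_im_le_norm _).trans_lt hv
  exact ⟨by linarith [(abs_lt.1 hre).2, hw.1], by linarith [abs_sub_abs_le_abs_sub v.im w.im, hw.2]⟩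

theorem log_exp_of_mem_halfStrip (ha : a ≤ π) (hw : w ∈ halfStrip L a) : log (exp w) = w :=
  log_exp (by linarith [(abs_lt.1 hw.2).1]) (by linarith [(abs_lt.1 hw.2).2])

theorem exp_mem_Ddom (ha : a ≤ π) (hw : w ∈ halfStrip L a) : exp w ∈ Ddom (Real.exp L) a := by
  refine ⟨norm_pos_iff.2 (exp_ne_zero w), by rw [norm_exp]; exact Real.exp_lt_exp.2 hw.1, ?_⟩
  rw [← log_im, log_exp_of_mem_halfStrip ha hw]
  exact hw.2

theorem log_mem_halfStrip (hz : z ∈ Ddom (Real.exp L) a) : log z ∈ halfStrip L a := by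
  obtain ⟨h0, hL, ha⟩ := hz
  refine ⟨?_, by rwa [log_im]⟩
  rw [log_re, ← Real.log_exp L]
  exact Real.log_lt_log h0 hL

end HalfStrip

noncomputable def logShift (g : ℂ → ℂ) (w : ℂ) : ℂ := log (-w) + g w

section LogShift

variable {g : ℂ → ℂ} {w c : ℂ} {L L' a b β δ M : ℝ}

theorem logShift_re (g : ℂ → ℂ) (w : ℂ) : (logShift g w).re = Real.log ‖w‖ + (g w).re := by
  rw [logShift, add_re, log_re, norm_neg]

theorem abs_im_logShift_le (g : ℂ → ℂ) (hw : w.re < 0) :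
    |(logShift g w).im| ≤ |w.im| / -w.re + ‖g w‖ := by
  have harg := abs_arg_le_abs_im_div_re (w := -w) (by rw [neg_re]; linarith)
  rw [neg_im, abs_neg, neg_re] at harg
  calc |(logShift g w).im| = |arg (-w) + (g w).im| := by rw [logShift, add_im, log_im]
    _ ≤ |arg (-w)| + |(g w).im| := abs_add_le _ _
    _ ≤ |w.im| / -w.re + ‖g w‖ := add_le_add harg (abs_im_le_norm _)

theorem hasDerivAt_logShift (hw : w.re < 0) (hg : DifferentiableAt ℂ g w) :
    HasDerivAt (logShift g) (w⁻¹ + deriv g w) w := by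
  have hslit : -w ∈ slitPlane := mem_slitPlane_iff.2 (Or.inl (by rw [neg_re]; linarith))
  have h := ((hasDerivAt_log hslit).comp w (hasDerivAt_neg w)).add hg.hasDerivAt
  rw [inv_neg, neg_mul_neg, mul_one] at h
  exact h

theorem lipschitzOnWith_logShift (hδ : 0 < δ) (hL : L' + δ ≤ L) (hL' : L' ≤ -4) (hb : b + δ ≤ a)
    (hg : DifferentiableOn ℂ g (halfStrip L a)) (hgb : ∀ w ∈ halfStrip L a, ‖g w‖ ≤ δ / 8) :
    LipschitzOnWith (1 / 2) (logShift g) (halfStrip L' b) := by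
  have hball : ∀ w ∈ halfStrip L' b, ball w δ ⊆ halfStrip L a :=
    fun w hw => ball_subset_halfStrip hL hb hw
  have hderiv : ∀ w ∈ halfStrip L' b, HasDerivAt (logShift g) (w⁻¹ + deriv g w) w :=
    fun w hw => hasDerivAt_logShift (by linarith [hw.1])
      (hg.differentiableAt (mem_of_superset (ball_mem_nhds w hδ) (hball w hw)))
  refine (convex_halfStrip L' b).lipschitzOnWith_of_nnnorm_deriv_le
    (fun w hw => (hderiv w hw).differentiableAt) fun w hw => ?_
  have hg' : ‖deriv g w‖ ≤ δ / 4 / δ := by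
    refine norm_deriv_le_div_of_mapsTo_ball (hg.mono (hball w hw)) (fun v hv => ?_) hδ
    rw [mem_closedBall, dist_eq_norm]
    linarith [norm_sub_le (g v) (g w), hgb v (hball w hw hv), hgb w (hball w hw (mem_ball_self hδ))]
  have hw4 : 4 ≤ ‖w‖ := by linarith [neg_abs_le w.re, abs_re_le_norm w, hw.1]
  have hinv : ‖w⁻¹‖ ≤ 1 / 4 := by
    rw [norm_inv]; exact inv_anti₀ (by norm_num) hw4 |>.trans_eq (by norm_num)
  rw [← NNReal.coe_le_coe, coe_nnnorm, (hderiv w hw).deriv]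
  calc ‖w⁻¹ + deriv g w‖ ≤ ‖w⁻¹‖ + ‖deriv g w‖ := norm_add_le _ _
    _ ≤ 1 / 4 + δ / 4 / δ := add_le_add hinv hg'
    _ = ((1 / 2 : NNReal) : ℝ) := by field_simp; norm_num

def fixedPointBox (c : ℂ) (δ : ℝ) : Set ℂ :=
  Icc (3 / 2 * c.re) (c.re / 2) ×ℂ Icc (c.im - δ / 2) (c.im + δ / 2)

theorem fixedPointBox_subset_halfStrip (hδ : 0 < δ) (hcM : 2 * M < -c.re) (hcβ : |c.im| < β) :
    fixedPointBox c δ ⊆ halfStrip (-M) (β + δ) := by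
  rintro w ⟨⟨-, hre⟩, him⟩
  refine ⟨by linarith, ?_⟩
  rw [abs_lt] at hcβ ⊢
  constructor <;> linarith [him.1, him.2]

theorem mapsTo_sub_logShift_fixedPointBox (hδ : 0 < δ) (hβπ : β + 2 * δ ≤ π)
    (hgb : ∀ w ∈ fixedPointBox c δ, ‖g w‖ ≤ δ / 8)
    (hcδ : 32 / δ ≤ -c.re) (hc10 : 10 ≤ -c.re) (hcβ : |c.im| < β) :
    MapsTo (fun w => c - logShift g w) (fixedPointBox c δ) (fixedPointBox c δ) := by
  rintro w hwB
  obtain ⟨⟨hre₁, hre₂⟩, him₁, him₂⟩ := hwB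
  have hgw := hgb w ⟨⟨hre₁, hre₂⟩, him₁, him₂⟩
  set x := -c.re
  have hx : 0 < x := by linarith
  have hδ2 : δ ≤ 2 := by linarith [abs_nonneg c.im, Real.pi_lt_four]
  have him : |w.im| ≤ 4 := by
    rw [abs_lt] at hcβ; rw [abs_le]; constructor <;> linarith [Real.pi_lt_four]
  have hnorm₁ : 1 ≤ ‖w‖ := by linarith [neg_abs_le w.re, abs_re_le_norm w]
  have hnorm₂ : ‖w‖ ≤ 2 * x := by
    linarith [norm_le_abs_re_add_abs_im w, abs_of_neg (show w.re < 0 by linarith)]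
  have hlog₀ : 0 ≤ Real.log ‖w‖ := Real.log_nonneg hnorm₁
  have hlog : Real.log ‖w‖ ≤ x / 4 + 2 := by
    linarith [Real.log_le_div_eight_add_two (show 0 < ‖w‖ by linarith)]
  have hgre : |(g w).re| ≤ 1 / 4 := by linarith [abs_re_le_norm (g w)]
  have hshift_im : |(logShift g w).im| ≤ δ / 2 := by
    have hquot : |w.im| / -w.re ≤ 8 / x := by
      rw [div_le_div_iff₀ (by linarith) hx]; nlinarith [abs_nonneg w.im]
    have hxδ : 8 / x ≤ δ / 4 := by
      rw [div_le_iff₀ hδ] at hcδ; rw [div_le_iff₀ hx]; linarith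
    linarith [abs_im_logShift_le g (show w.re < 0 by linarith)]
  rw [abs_le] at hgre hshift_im
  refine ⟨⟨?_, ?_⟩, ?_, ?_⟩ <;>
    simp only [sub_re, sub_im, logShift_re] <;> linarith [hgre.1, hgre.2, hshift_im.1, hshift_im.2]

theorem exists_add_logShift_eq (hδ : 0 < δ) (hβπ : β + 2 * δ ≤ π)
    (hlip : LipschitzOnWith (1 / 2) (logShift g) (halfStrip (-M) (β + δ)))
    (hgb : ∀ w ∈ halfStrip (-M) (β + δ), ‖g w‖ ≤ δ / 8)
    (hcM : 2 * M < -c.re) (hcδ : 32 / δ ≤ -c.re) (hc10 : 10 ≤ -c.re) (hcβ : |c.im| < β) :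
    ∃ w ∈ halfStrip (-M) (β + δ), w + logShift g w = c := by
  have hsub := fixedPointBox_subset_halfStrip hδ hcM hcβ
  have hmaps := mapsTo_sub_logShift_fixedPointBox hδ hβπ (fun w hw => hgb w (hsub hw)) hcδ hc10 hcβ
  have hlip' : LipschitzOnWith (1 / 2) (fun w => c - logShift g w) (fixedPointBox c δ) :=
    LipschitzOnWith.of_dist_le_mul fun v hv w hw => by
      rw [dist_sub_left]; exact (hlip.mono hsub).dist_le_mul v hv w hw
  have hc : c ∈ fixedPointBox c δ := by
    refine ⟨⟨?_, ?_⟩, ?_, ?_⟩ <;> linarith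
  have hclosed : IsClosed (fixedPointBox c δ) := isClosed_Icc.reProdIm isClosed_Icc
  obtain ⟨w, hw, hfix⟩ := hlip'.exists_isFixedPt (by norm_num) hclosed.isComplete hmaps ⟨c, hc⟩
  exact ⟨w, hsub hw, eq_sub_iff_add_eq.1 hfix.symm⟩

theorem add_logShift_eq_of_exp_eq (hα : a ≤ π) (hδ : 0 < δ) (hβa : β + 2 * δ ≤ a)
    (hM : 8 / δ ≤ M) (hw : w ∈ halfStrip (-M) a) (hgw : ‖g w‖ ≤ δ / 8) (hcβ : |c.im| < β)
    (hexp : exp (w + logShift g w) = exp c) :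
    w + logShift g w = c ∧ w ∈ halfStrip (-M) (β + δ) := by
  have hM0 : 0 < M := lt_of_lt_of_le (by positivity) hM
  have hshift_im : |(logShift g w).im| < δ := by
    have hquot : |w.im| / -w.re ≤ 4 / M := by
      rw [div_le_div_iff₀ (by linarith [hw.1]) hM0]
      nlinarith [hw.1, hw.2, Real.pi_lt_four, abs_nonneg w.im]
    have hMδ : 4 / M ≤ δ / 2 := by
      rw [div_le_iff₀ hδ] at hM; rw [div_le_iff₀ hM0]; linarith
    linarith [abs_im_logShift_le g (show w.re < 0 by linarith [hw.1])]
  obtain ⟨n, hn⟩ := exp_eq_exp_iff_exists_int.1 hexp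
  -- The imaginary parts of both sides differ by less than `2π`, so no branch shift occurs.
  have hn0 : n = 0 := by
    have him : w.im + (logShift g w).im = c.im + n * (2 * π) := by
      simpa using congrArg im hn
    have hlt : |(n : ℝ)| * (2 * π) < 1 * (2 * π) := by
      rw [← abs_of_pos Real.two_pi_pos, ← abs_mul, abs_of_pos Real.two_pi_pos, one_mul,
        show (n : ℝ) * (2 * π) = w.im + (logShift g w).im - c.im by linarith]
      linarith [abs_sub (w.im + (logShift g w).im) c.im, abs_add_le w.im (logShift g w).im, hw.2]
    have : |n| < 1 := by exact_mod_cast (lt_of_mul_lt_mul_right hlt Real.two_pi_pos.le)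
    exact Int.abs_lt_one_iff.1 this
  rw [hn0, Int.cast_zero, zero_mul, add_zero] at hn
  refine ⟨hn, hw.1, ?_⟩
  have him : w.im = c.im - (logShift g w).im := by
    linarith [congrArg im hn, add_im w (logShift g w)]
  rw [him]
  linarith [abs_sub c.im (logShift g w).im]

theorem existsUnique_exp_add_logShift_eq (hα : a ≤ π) (hδ : 0 < δ) (hβa : β + 2 * δ ≤ a)
    (hg : DifferentiableOn ℂ g (halfStrip L a)) (hgb : ∀ w ∈ halfStrip L a, ‖g w‖ ≤ δ / 8) :
    ∃ M K : ℝ, -M < L ∧ ∀ c ∈ halfStrip (-K) β,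
      ∃! w, w ∈ halfStrip (-M) a ∧ exp (w + logShift g w) = exp c := by
  set M := max (max (δ - L) 4) (8 / δ)
  have hM₁ : δ - L ≤ M := (le_max_left _ _).trans (le_max_left _ _)
  have hM₂ : 4 ≤ M := (le_max_right _ _).trans (le_max_left _ _)
  set K := max (max (2 * M) (32 / δ)) 10
  refine ⟨M, K, by linarith, fun c hc => ?_⟩
  have hsub : halfStrip (-M) a ⊆ halfStrip L a := halfStrip_subset (by linarith) le_rfl
  have hsubβ : halfStrip (-M) (β + δ) ⊆ halfStrip (-M) a := halfStrip_subset le_rfl (by linarith)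
  have hlip := lipschitzOnWith_logShift (L' := -M) (b := β + δ) hδ (by linarith) (by linarith)
    (by linarith) hg hgb
  have hcK : K < -c.re := by linarith [hc.1]
  obtain ⟨w₀, hw₀, hw₀c⟩ := exists_add_logShift_eq hδ (by linarith) hlip
    (fun w hw => hgb w (hsub (hsubβ hw)))
    (by linarith [(le_max_left _ _).trans (le_max_left (max (2 * M) (32 / δ)) 10)])
    (by linarith [(le_max_right _ _).trans (le_max_left (max (2 * M) (32 / δ)) 10)])
    (by linarith [le_max_right (max (2 * M) (32 / δ)) 10]) hc.2
  refine ⟨w₀, ⟨hsubβ hw₀, by rw [hw₀c]⟩, fun w ⟨hw, hexp⟩ => ?_⟩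
  obtain ⟨hwc, hwβ⟩ :=
    add_logShift_eq_of_exp_eq hα hδ hβa (le_max_right _ _) hw (hgb w (hsub hw)) hc.2 hexp
  exact hlip.injOn_add_self (by norm_num) hwβ hw₀ (hwc.trans hw₀c.symm)

end LogShift

noncomputable def logDefect (ψ : ℂ → ℂ) (w : ℂ) : ℂ := log (ψ (exp w) / (-exp w * w))

section LogDefect

variable {ψ : ℂ → ℂ} {s a : ℝ} {w : ℂ}

theorem exp_add_logShift_logDefect (hw : w ≠ 0) (hq : ψ (exp w) / (-exp w * w) ≠ 0) :
    ψ (exp w) = exp (w + logShift (logDefect ψ) w) := by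
  rw [logShift, logDefect, ← add_assoc, exp_add, exp_add, exp_log (neg_ne_zero.2 hw), exp_log hq]
  field_simp [exp_ne_zero w, hw]

theorem exists_halfStrip_ratio_near_one (hs : 0 < s) (ha : a ≤ π)
    (hasym : Tendsto (fun z : ℂ => ψ z / (-z * log z)) (𝓝[Ddom s a] 0) (𝓝 1))
    {η : ℝ} (hη : 0 < η) :
    ∃ L ≤ 0, Real.exp L ≤ s ∧
      ∀ w ∈ halfStrip L a, exp w ∈ Ddom s a ∧ ‖ψ (exp w) / (-exp w * w) - 1‖ < η := by
  obtain ⟨r, hr, hclose⟩ := Metric.tendsto_nhdsWithin_nhds.1 hasym η hη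
  set L := min (min (Real.log r) (Real.log s)) 0
  have hLr : L ≤ Real.log r := (min_le_left _ _).trans (min_le_left _ _)
  have hLs : L ≤ Real.log s := (min_le_left _ _).trans (min_le_right _ _)
  refine ⟨L, min_le_right _ _, (Real.exp_le_exp.2 hLs).trans_eq (Real.exp_log hs), fun w hw => ?_⟩
  have hD : exp w ∈ Ddom s a := by
    simpa only [Real.exp_log hs] using exp_mem_Ddom ha (halfStrip_subset hLs le_rfl hw)
  have hnear : dist (exp w) 0 < r := by
    rw [dist_zero_right, norm_exp, ← Real.exp_log hr]
    exact Real.exp_lt_exp.2 (hw.1.trans_le hLr)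
  refine ⟨hD, ?_⟩
  simpa only [dist_eq_norm, log_exp_of_mem_halfStrip ha hw] using hclose hD hnear

theorem exists_logDefect_small (hs : 0 < s) (ha : a ≤ π) (hψ : AnalyticOnNhd ℂ ψ (Ddom s a))
    (hasym : Tendsto (fun z : ℂ => ψ z / (-z * log z)) (𝓝[Ddom s a] 0) (𝓝 1))
    {ε : ℝ} (hε : 0 < ε) :
    ∃ L, Real.exp L ≤ s ∧ DifferentiableOn ℂ (logDefect ψ) (halfStrip L a) ∧
      ∀ w ∈ halfStrip L a,
        ‖logDefect ψ w‖ ≤ ε ∧ ψ (exp w) = exp (w + logShift (logDefect ψ) w) := by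
  obtain ⟨L, hL0, hLs, hnear⟩ :=
    exists_halfStrip_ratio_near_one (ψ := ψ) hs ha hasym (lt_min (half_pos hε) one_half_pos)
  have hw0 : ∀ w ∈ halfStrip L a, w ≠ 0 := fun w hw h0 => by
    have := hw.1; rw [h0, zero_re] at this; linarith
  have hslit : ∀ w ∈ halfStrip L a, ψ (exp w) / (-exp w * w) ∈ slitPlane := fun w hw => by
    simpa using mem_slitPlane_of_norm_lt_one ((hnear w hw).2.trans_le ((min_le_right _ _).trans
      (by norm_num)))
  refine ⟨L, hLs, fun w hw => ?_, fun w hw => ⟨?_, ?_⟩⟩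
  · have hψexp : DifferentiableAt ℂ (fun w => ψ (exp w)) w :=
      (hψ _ (hnear w hw).1).differentiableAt.comp w differentiableAt_exp
    have hq : DifferentiableAt ℂ (fun w => ψ (exp w) / (-exp w * w)) w :=
      hψexp.div (differentiableAt_exp.neg.mul differentiableAt_id)
        (mul_ne_zero (neg_ne_zero.2 (exp_ne_zero w)) (hw0 w hw))
    exact ((differentiableAt_log (hslit w hw)).comp w hq).differentiableWithinAt
  · have hsmall := (hnear w hw).2.le
    calc ‖logDefect ψ w‖ = ‖log (1 + (ψ (exp w) / (-exp w * w) - 1))‖ := by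
          rw [logDefect, add_sub_cancel]
      _ ≤ 3 / 2 * ‖ψ (exp w) / (-exp w * w) - 1‖ :=
          norm_log_one_add_half_le_self (hsmall.trans (min_le_right _ _))
      _ ≤ ε := by linarith [min_le_left (ε / 2) (1 / 2)]
  · exact exp_add_logShift_logDefect (hw0 w hw) (slitPlane_ne_zero (hslit w hw))

end LogDefect

theorem stmt_4_general (s α : ℝ) (hs : 0 < s) (hα₂ : α ≤ Real.pi)
    (ψ : ℂ → ℂ) (hψ : AnalyticOnNhd ℂ ψ (Ddom s α))
    (hasym : Tendsto (fun z : ℂ => ψ z / (-z * Complex.log z))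
      (𝓝[Ddom s α] 0) (𝓝 1)) :
    ∀ β : ℝ, 0 < β → β < α →
      ∃ ρ ρ' : ℝ, 0 < ρ ∧ ρ < s ∧ 0 < ρ' ∧
        ∀ y ∈ Ddom ρ' β, ∃! z : ℂ, z ∈ Ddom ρ α ∧ ψ z = y := by
  intro β _ hβα
  obtain ⟨L, hLs, hg, hgψ⟩ :=
    exists_logDefect_small hs hα₂ hψ hasym (ε := (α - β) / 16) (by linarith)
  obtain ⟨M, K, hML, huniq⟩ := existsUnique_exp_add_logShift_eq (β := β) (δ := (α - β) / 2) hα₂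
    (by linarith) (by linarith) hg fun w hw => (hgψ w hw).1.trans_eq (by ring)
  refine ⟨Real.exp (-M), Real.exp (-K), Real.exp_pos _, (Real.exp_lt_exp.2 hML).trans_le hLs,
    Real.exp_pos _, fun y hy => ?_⟩
  have hψexp : ∀ w ∈ halfStrip (-M) α, ψ (exp w) = exp (w + logShift (logDefect ψ) w) :=
    fun w hw => (hgψ w (halfStrip_subset hML.le le_rfl hw)).2
  have hy0 : y ≠ 0 := norm_pos_iff.1 hy.1
  obtain ⟨w, ⟨hw, hwy⟩, hw_unique⟩ := huniq (log y) (log_mem_halfStrip hy)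
  refine ⟨exp w, ⟨exp_mem_Ddom hα₂ hw, by rw [hψexp w hw, hwy, exp_log hy0]⟩, ?_⟩
  rintro z ⟨hz, hzy⟩
  have hz0 : z ≠ 0 := norm_pos_iff.1 hz.1
  have hlogz := log_mem_halfStrip hz
  have hψz : exp (log z + logShift (logDefect ψ) (log z)) = exp (log y) := by
    rw [← hψexp _ hlogz, exp_log hz0, hzy, exp_log hy0]
  rw [← exp_log hz0, hw_unique (log z) ⟨hlogz, hψz⟩]

/-- If `ψ` is analytic on `D_{s,α}` and `ψ(z) ∼ −z·Log z` as `z → 0` in `D_{s,α}`, then for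
every `β ∈ (0,α)` there are `ρ ∈ (0,s)` and `ρ' > 0` such that every `y ∈ D_{ρ',β}` has a
unique preimage under `ψ` in `D_{ρ,α}`. -/
theorem stmt_4 (s α : ℝ) (hs : 0 < s) (hα₁ : 0 < α) (hα₂ : α ≤ Real.pi)
    (ψ : ℂ → ℂ) (hψ : AnalyticOnNhd ℂ ψ (Ddom s α))
    (hasym : Tendsto (fun z : ℂ => ψ z / (-z * Complex.log z))
      (𝓝[Ddom s α] 0) (𝓝 1)) :
    ∀ β : ℝ, 0 < β → β < α →
      ∃ ρ ρ' : ℝ, 0 < ρ ∧ ρ < s ∧ 0 < ρ' ∧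
        ∀ y ∈ Ddom ρ' β, ∃! z : ℂ, z ∈ Ddom ρ α ∧ ψ z = y :=
  stmt_4_general s α hs hα₂ ψ hψ hasym
end

section
/- Let E = E(x,y) ∈ ℚ[[x,y]] be the unique bivariate formal power series with zero constant term satisfying E = x + y·E·(1−E²)^{−1} (the series 1−E² is invertible since E has zero constant term, and E is uniquely determined by induction on total degree). Then for all integers i ≥ 1 and j ≥ 0, the coefficient of x^{2i−1}·y^{j+1} in E equals (1/(2i−1))·binom(2i+j−1, j+1)·binom(i+j−1, j). -/
/-!
Clearing the denominator turns the defining equation into the cubic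
`P(E) = E³ - x E² + (y - 1) E + x = 0`. Differentiating `P(E) = 0` in `x` and in `y` and
eliminating `E` with `P` gives the linear first-order PDE
`x (y + 8) E_x + (4 x² + 2 y² + 2 y - 4) E_y = (y + 2) E + 2 x`;
the multiplier `∂P/∂E` has constant term `-1`, so it can be cancelled. On coefficients the PDE
is a recurrence that determines the coefficient of `x^u y^(n+1)` from lower powers of `y` and
from that of `x^(u-2) y^(n+1)`, starting from `E ≡ x` modulo `y`. The closed form obeys the
same recurrence: it is hypergeometric in both indices, so this reduces to an identity of
rational functions.
-/

open MvPowerSeries Finsupp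

namespace MvPowerSeries
variable {R : Type*} [CommRing R]

/-- Coefficients extended by zero to `ℤ × ℤ`: multiplication by `X 0`, `X 1` and the partial
derivatives then act as index shifts, with no boundary cases. -/
noncomputable def coeffZ (u n : ℤ) : MvPowerSeries (Fin 2) R →ₗ[R] R :=
  if 0 ≤ u ∧ 0 ≤ n then coeff (single 0 u.toNat + single 1 n.toNat) else 0

variable (F : MvPowerSeries (Fin 2) R)

@[simp]
theorem coeffZ_natCast (u n : ℕ) : coeffZ u n F = coeff (single 0 u + single 1 n) F := by
  simp [coeffZ]

theorem coeffZ_of_neg_left {u : ℤ} (n : ℤ) (hu : u < 0) : coeffZ u n F = 0 := by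
  simp [coeffZ, hu.not_ge]

theorem coeffZ_of_neg_right (u : ℤ) {n : ℤ} (hn : n < 0) : coeffZ u n F = 0 := by
  simp [coeffZ, hn.not_ge]

theorem coeffZ_C_mul (u n : ℤ) (a : R) : coeffZ u n (C a * F) = a * coeffZ u n F := by
  rw [← smul_eq_C_mul, map_smul, smul_eq_mul]

theorem coeffZ_X_zero_mul (u n : ℤ) : coeffZ u n (X 0 * F) = coeffZ (u - 1) n F := by
  rcases lt_or_ge n 0 with hn | hn
  · simp only [coeffZ_of_neg_right _ _ hn]
  lift n to ℕ using hn
  rcases lt_or_ge u 0 with hu | hu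
  · rw [coeffZ_of_neg_left _ _ hu, coeffZ_of_neg_left (u := u - 1) _ _ (by omega)]
  lift u to ℕ using hu
  cases u with
  | zero =>
    rw [coeffZ_of_neg_left (u := (0 : ℕ) - 1) _ _ (by omega), coeffZ_natCast, X_def,
      coeff_monomial_mul, if_neg]
    intro h
    simpa using h 0
  | succ m =>
    have hd : single 0 (m + 1) + single 1 n
        = single 0 1 + (single (0 : Fin 2) m + single 1 n) := by
      rw [single_add]; abel
    rw [Nat.cast_add_one, add_sub_cancel_right, ← Nat.cast_add_one, coeffZ_natCast,
      coeffZ_natCast, hd, X_def, coeff_add_monomial_mul, one_mul]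

theorem coeffZ_X_one_mul (u n : ℤ) : coeffZ u n (X 1 * F) = coeffZ u (n - 1) F := by
  rcases lt_or_ge u 0 with hu | hu
  · simp only [coeffZ_of_neg_left _ _ hu]
  lift u to ℕ using hu
  rcases lt_or_ge n 0 with hn | hn
  · rw [coeffZ_of_neg_right _ _ hn, coeffZ_of_neg_right (n := n - 1) _ _ (by omega)]
  lift n to ℕ using hn
  cases n with
  | zero =>
    rw [coeffZ_of_neg_right (n := (0 : ℕ) - 1) _ _ (by omega), coeffZ_natCast, X_def,
      coeff_monomial_mul, if_neg]
    intro h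
    simpa using h 1
  | succ m =>
    have hd : single 0 u + single 1 (m + 1)
        = single 1 1 + (single (0 : Fin 2) u + single 1 m) := by
      rw [single_add]; abel
    rw [Nat.cast_add_one, add_sub_cancel_right, ← Nat.cast_add_one, coeffZ_natCast,
      coeffZ_natCast, hd, X_def, coeff_add_monomial_mul, one_mul]

theorem coeffZ_pderiv_zero (u n : ℤ) :
    coeffZ u n (pderiv R 0 F) = (u + 1) * coeffZ (u + 1) n F := by
  rcases lt_or_ge n 0 with hn | hn
  · simp only [coeffZ_of_neg_right _ _ hn, mul_zero]
  lift n to ℕ using hn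
  rcases lt_or_ge u 0 with hu | hu
  · rw [coeffZ_of_neg_left _ _ hu]
    obtain rfl | hu' := eq_or_ne u (-1)
    · simp
    · rw [coeffZ_of_neg_left (u := u + 1) _ _ (by omega), mul_zero]
  lift u to ℕ using hu
  rw [coeffZ_natCast, ← Nat.cast_add_one, coeffZ_natCast, coeff_pderiv]
  simp [add_right_comm, mul_comm]

theorem coeffZ_pderiv_one (u n : ℤ) :
    coeffZ u n (pderiv R 1 F) = (n + 1) * coeffZ u (n + 1) F := by
  rcases lt_or_ge u 0 with hu | hu
  · simp only [coeffZ_of_neg_left _ _ hu, mul_zero]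
  lift u to ℕ using hu
  rcases lt_or_ge n 0 with hn | hn
  · rw [coeffZ_of_neg_right _ _ hn]
    obtain rfl | hn' := eq_or_ne n (-1)
    · simp
    · rw [coeffZ_of_neg_right (n := n + 1) _ _ (by omega), mul_zero]
  lift n to ℕ using hn
  rw [coeffZ_natCast, ← Nat.cast_add_one, coeffZ_natCast, coeff_pderiv]
  simp [add_assoc, mul_comm]

theorem coeffZ_one (u n : ℤ) :
    coeffZ u n (1 : MvPowerSeries (Fin 2) R) = if u = 0 ∧ n = 0 then 1 else 0 := by
  rcases lt_or_ge u 0 with hu | hu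
  · rw [coeffZ_of_neg_left _ _ hu, if_neg (by omega)]
  rcases lt_or_ge n 0 with hn | hn
  · rw [coeffZ_of_neg_right _ _ hn, if_neg (by omega)]
  lift u to ℕ using hu
  lift n to ℕ using hn
  simp [coeff_one]

theorem coeffZ_X_zero (u n : ℤ) :
    coeffZ u n (X 0 : MvPowerSeries (Fin 2) R) = if u = 1 ∧ n = 0 then 1 else 0 := by
  rw [← mul_one (X 0), coeffZ_X_zero_mul, coeffZ_one]
  simp only [sub_eq_zero]

end MvPowerSeries

section PDE
variable {R : Type*} [CommRing R]

theorem pde_of_cubic {E : MvPowerSeries (Fin 2) R} (hE0 : constantCoeff E = 0)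
    (hcubic : E ^ 3 - X 0 * E ^ 2 + (X 1 - 1) * E + X 0 = 0) :
    X 0 * (X 1 + 8) * pderiv R 0 E + (4 * X 0 ^ 2 + 2 * X 1 ^ 2 + 2 * X 1 - 4) * pderiv R 1 E
      = (X 1 + 2) * E + 2 * X 0 := by
  set Q : MvPowerSeries (Fin 2) R := 3 * E ^ 2 - 2 * X 0 * E + X 1 - 1
  have hchain (i : Fin 2) :
      Q * pderiv R i E + (1 - E ^ 2) * pderiv R i (X 0) + E * pderiv R i (X 1) = 0 := by
    have h := congrArg (pderiv R i) hcubic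
    simp only [map_add, map_sub, map_zero, Derivation.leibniz, Derivation.leibniz_pow,
      Derivation.map_one_eq_zero, smul_eq_mul, nsmul_eq_mul] at h
    linear_combination h
  have hx : Q * pderiv R 0 E = E ^ 2 - 1 := by
    simpa [sub_eq_zero, add_eq_zero_iff_eq_neg] using hchain 0
  have hy : Q * pderiv R 1 E = -E := by
    simpa [add_eq_zero_iff_eq_neg] using hchain 1
  have hQ : IsUnit Q := by
    rw [isUnit_iff_constantCoeff]
    simp [Q, hE0]
  refine hQ.mul_left_cancel ?_
  linear_combination X 0 * (X 1 + 8) * hx + (4 * X 0 ^ 2 + 2 * X 1 ^ 2 + 2 * X 1 - 4) * hy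
    - 3 * (X 1 + 2) * hcubic

theorem coeffZ_recurrence_of_pde {E : MvPowerSeries (Fin 2) R}
    (hpde : X 0 * (X 1 + 8) * pderiv R 0 E
      + (4 * X 0 ^ 2 + 2 * X 1 ^ 2 + 2 * X 1 - 4) * pderiv R 1 E = (X 1 + 2) * E + 2 * X 0)
    (u n : ℤ) :
    4 * (n + 1) * coeffZ u (n + 1) E
      = (8 * u + 2 * n - 2) * coeffZ u n E + (u + 2 * n - 3) * coeffZ u (n - 1) E
        + 4 * (n + 1) * coeffZ (u - 2) (n + 1) E - 2 * if u = 1 ∧ n = 0 then 1 else 0 := by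
  have h : X 0 * (X 1 * pderiv R 0 E) + C 8 * (X 0 * pderiv R 0 E)
      + C 4 * (X 0 * (X 0 * pderiv R 1 E)) + C 2 * (X 1 * (X 1 * pderiv R 1 E))
      + C 2 * (X 1 * pderiv R 1 E) - C 4 * pderiv R 1 E
      = X 1 * E + C 2 * E + C 2 * X 0 := by
    simp only [map_ofNat]
    linear_combination hpde
  replace h := congrArg (coeffZ u n) h
  simp only [map_add, map_sub, coeffZ_C_mul, coeffZ_X_zero_mul, coeffZ_X_one_mul,
    coeffZ_pderiv_zero, coeffZ_pderiv_one, coeffZ_X_zero, sub_add_cancel] at h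
  rw [sub_sub, show (1 : ℤ) + 1 = 2 by norm_num] at h
  push_cast at h
  linear_combination -h

end PDE

namespace Nat
variable {K : Type*} [Field K] [CharZero K]

theorem cast_choose_succ_succ (n m : ℕ) :
    ((n + 1).choose (m + 1) : K) = (n + 1) / (m + 1) * n.choose m := by
  rw [div_mul_eq_mul_div, eq_div_iff (cast_add_one_ne_zero m)]
  exact_mod_cast (add_one_mul_choose_eq n m).symm

theorem cast_choose_add_succ (m j : ℕ) :
    ((m + j + 1).choose m : K) = (m + j + 1) / (j + 1) * (m + j).choose m := by
  have h := choose_mul_succ_eq (m + j) m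
  rw [show m + j + 1 - m = j + 1 by omega] at h
  rw [div_mul_eq_mul_div, eq_div_iff (cast_add_one_ne_zero j),
    mul_comm _ ((m + j).choose m : K)]
  exact_mod_cast h.symm

end Nat

/-- The claimed coefficient of `x^(2k+1) y^(r+1)`. -/
def eulerianCoeff (k r : ℕ) : ℚ :=
  (2 * k + r + 1).choose (r + 1) * (k + r).choose r / (2 * k + 1)

theorem eulerianCoeff_zero_left (r : ℕ) : eulerianCoeff 0 r = 1 := by
  simp [eulerianCoeff]

theorem eulerianCoeff_zero_right (k : ℕ) : eulerianCoeff k 0 = 1 := by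
  have : (2 * k + 1 : ℚ) ≠ 0 := by positivity
  simp [eulerianCoeff, this]

theorem eulerianCoeff_succ_right (k r : ℕ) :
    eulerianCoeff k (r + 1)
      = (k + r + 1) * (2 * k + r + 2) / ((r + 1) * (r + 2)) * eulerianCoeff k r := by
  simp only [eulerianCoeff, ← add_assoc, Nat.cast_choose_succ_succ]
  push_cast
  field_simp
  ring

theorem eulerianCoeff_succ_left (k r : ℕ) :
    eulerianCoeff (k + 1) r = (k + r + 1) * (2 * k + r + 2) * (2 * k + r + 3)
      / ((k + 1) * (2 * k + 2) * (2 * k + 3)) * eulerianCoeff k r := by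
  rw [eulerianCoeff, eulerianCoeff, show 2 * (k + 1) + r + 1 = (r + 1) + (2 * k + 1) + 1 by ring,
    Nat.cast_choose_add_succ, show (r + 1) + (2 * k + 1) = (r + 1) + 2 * k + 1 by ring,
    Nat.cast_choose_add_succ, show k + 1 + r = r + k + 1 by ring, Nat.cast_choose_add_succ,
    show (r + 1) + 2 * k = 2 * k + r + 1 by ring, add_comm r k]
  push_cast
  field_simp
  ring

theorem eulerianCoeff_one_right (k : ℕ) : eulerianCoeff k 1 = (k + 1) ^ 2 := by
  rw [eulerianCoeff_succ_right, eulerianCoeff_zero_right]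
  field_simp
  ring

theorem eulerianCoeff_recurrence (k r : ℕ) :
    4 * (r + 3) * eulerianCoeff (k + 1) (r + 2)
      = (16 * k + 2 * r + 26) * eulerianCoeff (k + 1) (r + 1)
        + (2 * k + 2 * r + 4) * eulerianCoeff (k + 1) r
        + 4 * (r + 3) * eulerianCoeff k (r + 2) := by
  rw [eulerianCoeff_succ_right (k + 1) (r + 1), eulerianCoeff_succ_right (k + 1) r,
    eulerianCoeff_succ_right k (r + 1), eulerianCoeff_succ_right k r, eulerianCoeff_succ_left]
  push_cast
  field_simp
  ring

namespace EulerianSeries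

section Field
variable {K : Type*} [Field K] {E : MvPowerSeries (Fin 2) K}
  (hE : E = X 0 + X 1 * E * (1 - E ^ 2)⁻¹)
include hE

theorem constantCoeff_eq_zero : constantCoeff E = 0 := by
  rw [hE]
  simp

theorem cubic : E ^ 3 - X 0 * E ^ 2 + (X 1 - 1) * E + X 0 = 0 := by
  have hinv : (1 - E ^ 2)⁻¹ * (1 - E ^ 2) = 1 :=
    MvPowerSeries.inv_mul_cancel _ (by simp [constantCoeff_eq_zero hE])
  linear_combination -(1 - E ^ 2) * hE - X 1 * E * hinv

theorem coeffZ_zero_right (u : ℤ) : coeffZ u 0 E = if u = 1 then 1 else 0 := by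
  have h := congrArg (coeffZ u 0) hE
  rw [map_add, mul_assoc, coeffZ_X_one_mul, coeffZ_of_neg_right (n := 0 - 1) _ _ (by norm_num),
    add_zero, coeffZ_X_zero] at h
  simpa using h

theorem pde :
    X 0 * (X 1 + 8) * pderiv K 0 E + (4 * X 0 ^ 2 + 2 * X 1 ^ 2 + 2 * X 1 - 4) * pderiv K 1 E
      = (X 1 + 2) * E + 2 * X 0 :=
  pde_of_cubic (constantCoeff_eq_zero hE) (cubic hE)

theorem coeffZ_recurrence (u n : ℤ) :
    4 * (n + 1) * coeffZ u (n + 1) E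
      = (8 * u + 2 * n - 2) * coeffZ u n E + (u + 2 * n - 3) * coeffZ u (n - 1) E
        + 4 * (n + 1) * coeffZ (u - 2) (n + 1) E - 2 * if u = 1 ∧ n = 0 then 1 else 0 :=
  coeffZ_recurrence_of_pde (pde hE) u n

theorem coeffZ_recurrence_odd (k : ℕ) (n : ℤ) :
    4 * (n + 1) * coeffZ (2 * k + 3) (n + 1) E
      = (16 * k + 2 * n + 22) * coeffZ (2 * k + 3) n E
        + (2 * k + 2 * n) * coeffZ (2 * k + 3) (n - 1) E
        + 4 * (n + 1) * coeffZ (2 * k + 1) (n + 1) E := by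
  have h := coeffZ_recurrence hE (2 * k + 3) n
  rw [if_neg (by omega), show (2 * k + 3 - 2 : ℤ) = 2 * k + 1 by ring] at h
  push_cast at h
  linear_combination h

end Field

section Rat
variable {E : MvPowerSeries (Fin 2) ℚ} (hE : E = X 0 + X 1 * E * (1 - E ^ 2)⁻¹)
include hE

theorem coeffZ_one_left_eq_one (n : ℕ) : coeffZ 1 n E = 1 := by
  have hrec := coeffZ_recurrence hE
  induction n using Nat.strong_induction_on with
  | _ n ih =>
  rcases n with _ | _ | n
  · simpa using coeffZ_zero_right hE 1
  · have h := hrec 1 0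
    norm_num [coeffZ_zero_right hE, coeffZ_of_neg_left, coeffZ_of_neg_right] at h
    push_cast
    linarith
  · have h := hrec 1 (n + 1)
    have h₀ := ih n (by omega)
    have h₁ := ih (n + 1) (by omega)
    push_cast at h₁ ⊢
    norm_num [coeffZ_of_neg_left, h₀, h₁, if_neg (show (n : ℤ) + 1 ≠ 0 by omega)] at h
    apply mul_left_cancel₀ (show (4 * ((n : ℚ) + 1 + 1)) ≠ 0 by positivity)
    linear_combination h

theorem coeffZ_odd_eq_eulerianCoeff (k r : ℕ) :
    coeffZ (2 * k + 1) (r + 1) E = eulerianCoeff k r := by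
  induction k generalizing r with
  | zero => simpa [eulerianCoeff_zero_left] using coeffZ_one_left_eq_one hE (r + 1)
  | succ k ihk =>
  have hodd := coeffZ_recurrence_odd hE k
  rw [show (2 * ((k + 1 : ℕ) : ℤ) + 1) = 2 * k + 3 by push_cast; ring]
  induction r using Nat.strong_induction_on with
  | _ r ih =>
  rcases r with _ | _ | r
  · have h := hodd 0
    have h₀ := ihk 0
    rw [coeffZ_zero_right hE, if_neg (by omega),
      coeffZ_of_neg_right (n := 0 - 1) _ _ (by norm_num)] at h
    norm_num [eulerianCoeff_zero_right] at h h₀ ⊢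
    linarith
  · have h := hodd 1
    have h₀ := ih 0 (by omega)
    have h₁ := ihk 1
    norm_num [eulerianCoeff_zero_right, eulerianCoeff_one_right] at h h₀ h₁ ⊢
    rw [coeffZ_zero_right hE, if_neg (by omega), h₀, h₁] at h
    linear_combination h / 8
  · have h := hodd (r + 1 + 1)
    have h₀ := ih r (by omega)
    have h₁ := ih (r + 1) (by omega)
    have h₂ := ihk (r + 1 + 1)
    push_cast at h₀ h₁ h₂ ⊢
    rw [add_sub_cancel_right, h₀, h₁, h₂] at h
    push_cast at h
    apply mul_left_cancel₀ (show (4 * ((r : ℚ) + 3)) ≠ 0 by positivity)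
    linear_combination h - eulerianCoeff_recurrence k r

end Rat

end EulerianSeries

theorem stmt_6_general (E : MvPowerSeries (Fin 2) ℚ)
    (hEeq : E = MvPowerSeries.X 0 + MvPowerSeries.X 1 * E * (1 - E ^ 2)⁻¹) :
    ∀ i j : ℕ, 1 ≤ i →
      MvPowerSeries.coeff (Finsupp.single (0 : Fin 2) (2 * i - 1) +
          Finsupp.single (1 : Fin 2) (j + 1)) E
        = (1 / (2 * (i : ℚ) - 1)) * ((2 * i + j - 1).choose (j + 1) : ℚ) *
            (((i + j - 1).choose j : ℕ) : ℚ) := by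
  intro i j hi
  obtain ⟨k, rfl⟩ : ∃ k, i = k + 1 := ⟨i - 1, by omega⟩
  have h := coeffZ_natCast E (2 * k + 1) (j + 1)
  push_cast at h
  rw [show 2 * (k + 1) - 1 = 2 * k + 1 by omega, show 2 * (k + 1) + j - 1 = 2 * k + j + 1 by omega,
    show k + 1 + j - 1 = k + j by omega, ← h, EulerianSeries.coeffZ_odd_eq_eulerianCoeff hEeq,
    eulerianCoeff]
  push_cast
  ring

/-- Let `E ∈ ℚ[[x,y]]` be the unique bivariate formal power series with zero constant term
satisfying `E = x + y·E·(1−E²)⁻¹`. Then for `i ≥ 1` and `j ≥ 0`, the coefficient of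
`x^{2i−1}·y^{j+1}` in `E` equals `(1/(2i−1))·binom(2i+j−1, j+1)·binom(i+j−1, j)`. -/
theorem stmt_6 (E : MvPowerSeries (Fin 2) ℚ)
    (hE0 : MvPowerSeries.constantCoeff E = 0)
    (hEeq : E = MvPowerSeries.X 0 + MvPowerSeries.X 1 * E * (1 - E ^ 2)⁻¹) :
    ∀ i j : ℕ, 1 ≤ i →
      MvPowerSeries.coeff (Finsupp.single (0 : Fin 2) (2 * i - 1) +
          Finsupp.single (1 : Fin 2) (j + 1)) E
        = (1 / (2 * (i : ℚ) - 1)) * ((2 * i + j - 1).choose (j + 1) : ℚ) *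
            (((i + j - 1).choose j : ℕ) : ℚ) :=
  stmt_6_general E hEeq
end

section
/- Let E be a finite set and let 𝓕 be a nonempty family of subsets of E such that: (i) for every F ∈ 𝓕 and every e ∈ E ∖ F, the set F ∪ {e} belongs to 𝓕; (ii) calling an element e ∈ E flippable for F ∈ 𝓕 if the symmetric difference F △ {e} belongs to 𝓕, for every F ∈ 𝓕 and every e flippable for F, the set of flippable elements of F △ {e} equals the set of flippable elements of F. Then all members of 𝓕 have the same number b of flippable elements, and the identity Σ_{F ∈ 𝓕} u^{|E|+1−|F|} = u·(1+u)^b holds in ℤ[u]. -/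
/-- Let `E` be a finite set and `𝓕` a nonempty family of subsets of `E` such that (i) `𝓕` is
closed under adding any missing element, and (ii) flipping a flippable element does not change
the set of flippable elements (where `e` is flippable for `F` iff `F △ {e} ∈ 𝓕`).  Then all
members of `𝓕` have the same number `b` of flippable elements, and
`Σ_{F ∈ 𝓕} u^{|E|+1−|F|} = u·(1+u)^b` in `ℤ[u]`. -/
theorem stmt_7 {E : Type*} [Fintype E] [DecidableEq E]
    (𝓕 : Finset (Finset E)) (hne : 𝓕.Nonempty)
    (h1 : ∀ F ∈ 𝓕, ∀ e : E, e ∉ F → insert e F ∈ 𝓕)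
    (h2 : ∀ F ∈ 𝓕, ∀ e : E, symmDiff F {e} ∈ 𝓕 →
      {x : E | symmDiff (symmDiff F {e}) {x} ∈ 𝓕} = {x : E | symmDiff F {x} ∈ 𝓕}) :
    ∃ b : ℕ,
      (∀ F ∈ 𝓕, ({x : E | symmDiff F {x} ∈ 𝓕} : Set E).ncard = b) ∧
      ∑ F ∈ 𝓕, (Polynomial.X : Polynomial ℤ) ^ (Fintype.card E + 1 - F.card)
        = Polynomial.X * (1 + Polynomial.X) ^ b := by
  have hsd_ins : ∀ (F : Finset E) (e : E), e ∉ F → symmDiff F {e} = insert e F := by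
    intro F e he
    ext x; simp [Finset.mem_symmDiff]; by_cases hx : x = e <;> simp [hx] <;> tauto
  have hsd_er : ∀ (F : Finset E) (e : E), e ∈ F → symmDiff F {e} = F.erase e := by
    intro F e he
    ext x; simp [Finset.mem_symmDiff]; by_cases hx : x = e <;> simp [hx] <;> tauto
  -- key induction: univ ∈ 𝓕 and flippable set is that of univ
  have key : ∀ n : ℕ, ∀ F ∈ 𝓕, Fᶜ.card = n →
      ((Finset.univ : Finset E) ∈ 𝓕 ∧
        {x : E | symmDiff F {x} ∈ 𝓕} = {x : E | symmDiff (Finset.univ : Finset E) {x} ∈ 𝓕}) := by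
    intro n
    induction n using Nat.strong_induction_on with
    | _ n ih =>
      intro F hF hcard
      by_cases hFu : F = Finset.univ
      · subst hFu; exact ⟨hF, rfl⟩
      · have hex : ∃ e, e ∉ F := by
          by_contra h; push_neg at h; exact hFu (Finset.eq_univ_iff_forall.mpr h)
        obtain ⟨e, he⟩ := hex
        have hins : insert e F ∈ 𝓕 := h1 F hF e he
        have hsd : symmDiff F {e} = insert e F := hsd_ins F e he
        have hec : e ∈ Fᶜ := Finset.mem_compl.mpr he
        have hcc : (insert e F)ᶜ = Fᶜ.erase e := Finset.compl_insert
        have hlt : (insert e F)ᶜ.card < n := by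
          rw [hcc, Finset.card_erase_of_mem hec, hcard]
          exact Nat.sub_lt (by rw [← hcard]; exact Finset.card_pos.mpr ⟨e, hec⟩) one_pos
        obtain ⟨hu, hB⟩ := ih _ hlt (insert e F) hins rfl
        refine ⟨hu, ?_⟩
        have h2' := h2 F hF e (hsd ▸ hins)
        rw [hsd] at h2'
        rw [← hB, h2']
    -- done
  obtain ⟨F₀, hF₀⟩ := hne
  obtain ⟨huniv, -⟩ := key _ F₀ hF₀ rfl
  classical
  set B : Finset E := Finset.univ.filter (fun x => symmDiff (Finset.univ : Finset E) {x} ∈ 𝓕) with hBdef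
  have hBset : ∀ F ∈ 𝓕, {x : E | symmDiff F {x} ∈ 𝓕} = (B : Set E) := by
    intro F hF
    obtain ⟨-, hB⟩ := key _ F hF rfl
    rw [hB]; ext x; simp [hBdef]
  -- 𝓕 = sets containing Bᶜ
  have hsub : ∀ F ∈ 𝓕, Bᶜ ⊆ F := by
    intro F hF e heB
    by_contra he
    have hins := h1 F hF e he
    have : e ∈ {x : E | symmDiff F {x} ∈ 𝓕} := by
      simp only [Set.mem_setOf_eq, hsd_ins F e he]; exact hins
    rw [hBset F hF] at this
    exact (Finset.mem_compl.mp heB) this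
  have hmem : ∀ n : ℕ, ∀ F : Finset E, Bᶜ ⊆ F → Fᶜ.card = n → F ∈ 𝓕 := by
    intro n
    induction n using Nat.strong_induction_on with
    | _ n ih =>
      intro F hBF hcard
      by_cases hFu : F = Finset.univ
      · subst hFu; exact huniv
      · have hex : ∃ e, e ∉ F := by
          by_contra h; push_neg at h; exact hFu (Finset.eq_univ_iff_forall.mpr h)
        obtain ⟨e, he⟩ := hex
        have heB : e ∈ B := by
          by_contra h; exact he (hBF (Finset.mem_compl.mpr h))
        have hec : e ∈ Fᶜ := Finset.mem_compl.mpr he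
        have hcc : (insert e F)ᶜ = Fᶜ.erase e := Finset.compl_insert
        have hlt : (insert e F)ᶜ.card < n := by
          rw [hcc, Finset.card_erase_of_mem hec, hcard]
          exact Nat.sub_lt (by rw [← hcard]; exact Finset.card_pos.mpr ⟨e, hec⟩) one_pos
        have hG : insert e F ∈ 𝓕 :=
          ih _ hlt (insert e F) (hBF.trans (Finset.subset_insert e F)) rfl
        have heBG : e ∈ {x : E | symmDiff (insert e F) {x} ∈ 𝓕} := by
          rw [hBset _ hG]; simpa using heB
        have : symmDiff (insert e F) {e} ∈ 𝓕 := heBG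
        rwa [hsd_er _ e (Finset.mem_insert_self e F), Finset.erase_insert he] at this
  -- cardinality facts
  have hBcard : Bᶜ.card = Fintype.card E - B.card := by
    rw [Finset.card_compl]
  have hBle : B.card ≤ Fintype.card E := Finset.card_le_univ B
  refine ⟨B.card, ?_, ?_⟩
  · intro F hF
    rw [hBset F hF, Set.ncard_coe_finset]
  · -- reindex sum over B.powerset
    have hbij : ∑ F ∈ 𝓕, (Polynomial.X : Polynomial ℤ) ^ (Fintype.card E + 1 - F.card)
        = ∑ S ∈ B.powerset, (Polynomial.X : Polynomial ℤ) ^ (B.card + 1 - S.card) := by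
      refine Finset.sum_nbij' (fun F => F ∩ B) (fun S => S ∪ Bᶜ) ?_ ?_ ?_ ?_ ?_
      · intro F hF; exact Finset.mem_powerset.mpr (Finset.inter_subset_right)
      · intro S hS; exact hmem _ _ (Finset.subset_union_right) rfl
      · intro F hF
        ext x
        simp only [Finset.mem_union, Finset.mem_inter, Finset.mem_compl]
        constructor
        · rintro (⟨h, -⟩ | h)
          · exact h
          · exact hsub F hF (Finset.mem_compl.mpr h)
        · intro h
          by_cases hx : x ∈ B
          · exact Or.inl ⟨h, hx⟩
          · exact Or.inr hx
      · intro S hS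
        have hSB := Finset.mem_powerset.mp hS
        ext x
        simp only [Finset.mem_inter, Finset.mem_union, Finset.mem_compl]
        constructor
        · rintro ⟨h | h, hB⟩
          · exact h
          · exact absurd hB h
        · intro h
          exact ⟨Or.inl h, hSB h⟩
      · intro F hF
        beta_reduce
        congr 1
        have h3 : F \ B = Bᶜ := by
          ext x
          simp only [Finset.mem_sdiff, Finset.mem_compl]
          constructor
          · exact And.right
          · intro h
            exact ⟨hsub F hF (Finset.mem_compl.mpr h), h⟩
        have hFc := Finset.card_inter_add_card_sdiff F B
        rw [h3] at hFc
        have hle : (F ∩ B).card ≤ B.card := Finset.card_le_card Finset.inter_subset_right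
        omega
    rw [hbij]
    -- final identity
    have hfac : ∀ S ∈ B.powerset, (Polynomial.X : Polynomial ℤ) ^ (B.card + 1 - S.card)
        = (Polynomial.X : Polynomial ℤ) ^ (B \ S).card * Polynomial.X := by
      intro S hS
      have hSB := Finset.mem_powerset.mp hS
      have hle := Finset.card_le_card hSB
      rw [Finset.card_sdiff_of_subset hSB, ← pow_succ]
      congr 1; omega
    rw [Finset.sum_congr rfl hfac, ← Finset.sum_mul]
    have := Finset.prod_add (fun _ : E => (1 : Polynomial ℤ)) (fun _ : E => (Polynomial.X : Polynomial ℤ)) B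
    simp only [Finset.prod_const, one_pow, one_mul] at this
    rw [← this, mul_comm]
end

section
/- Let φ(x) = Σ_{i≥2} (3i−3)!/(((i−1)!)²·i!)·x^i ∈ ℚ[[x]], let R ∈ (ℚ[u])[[z]] be the unique formal power series with zero constant term satisfying R = z + u·φ(R), and let H ∈ (ℚ[u])[[z]] be the unique series with H(0)=0 and u·∂H/∂z = 2(R−z) (the series R−z is divisible by u, so H is well defined over ℚ[u]). Then, writing H′ = ∂H/∂z and H″ = ∂²H/∂z², the following identity holds in (ℚ[u])[[z]]: 3(u+1)u²·H′²·H″ + 12u²z·H′·H″ + 6(u−8)u·H′² + 240·H + 4(6uz − 54z + 1)·H′ + 4(3uz² + 30uH + 27z² − z)·H″ + 24z² = 0. -/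
/-!
Put `A = φ(R)`, `B = φ'(R)` and `F = Φ(R)`, where `Φ' = φ` and `Φ(0) = 0`. From `R = z + uA`
and the chain rule, `R'·(1 - uB) = 1`, `H' = 2A`, `H'' = 2BR'`, and `H = 2F - uA²` (both sides
have derivative `2A` and vanish at `0`). The coefficients `a_n` of `φ` are hypergeometric,
`n(n-1)·a_n = 3(3n-4)(3n-5)·a_{n-1}`, which is the same as the linear equation
`60Φ + φ + (27x² - x)φ' - 54xφ + 3x² = 0`. Substituting `x = R` and eliminating `z`, `H`, `H'`,
`H''`, the differential equation multiplied by the unit `1 - uB` becomes a consequence of these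
relations.
-/

/-- The coefficient `(3i−3)!/(((i−1)!)²·i!)` of `φ(x) = Σ_{i≥2} (3i−3)!/(((i−1)!)²·i!)·x^i`. -/
noncomputable def tetraCoef (i : ℕ) : ℚ :=
  (Nat.factorial (3 * i - 3) : ℚ) /
    ((Nat.factorial (i - 1) : ℚ) ^ 2 * (Nat.factorial i : ℚ))

open PowerSeries

namespace PowerSeries

variable {R S : Type*}

theorem derivative_map [CommSemiring R] [CommSemiring S] (f : R →+* S) (g : R⟦X⟧) :
    d⁄dX S (map f g) = map f (d⁄dX R g) := by
  ext n
  simp [coeff_derivative]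

theorem coeff_subst_eq_sum_range [CommRing R] [CommRing S] [Algebra R S] {a : S⟦X⟧}
    (ha : constantCoeff a = 0) (f : R⟦X⟧) (n : ℕ) :
    coeff n (f.subst a) = ∑ i ∈ Finset.range (n + 1), coeff i f • coeff n (a ^ i) := by
  rw [coeff_subst' (.of_constantCoeff_zero' ha)]
  refine finsum_eq_sum_of_support_subset _ fun i hi => ?_
  contrapose! hi
  have hlt : n < i := by simpa using hi
  have : coeff n (a ^ i) = 0 :=
    X_pow_dvd_iff.mp (pow_dvd_pow_of_dvd (X_dvd_iff.mpr ha) i) n hlt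
  simp [this]

end PowerSeries

theorem mul_tetraCoef_add_three (m : ℕ) :
    ((m : ℚ) + 3) * (m + 2) * tetraCoef (m + 3)
      = 3 * (3 * m + 4) * (3 * m + 5) * tetraCoef (m + 2) := by
  simp only [tetraCoef, show 3 * (m + 3) - 3 = 3 * m + 3 + 3 by omega,
    show 3 * (m + 2) - 3 = 3 * m + 3 by omega, show m + 3 - 1 = m + 1 + 1 by omega,
    show m + 2 - 1 = m + 1 by omega, Nat.factorial_succ]
  push_cast
  field_simp
  ring

noncomputable def tetraSeries : ℚ⟦X⟧ := mk fun i => if 2 ≤ i then tetraCoef i else 0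

noncomputable def tetraPrimitive : ℚ⟦X⟧ :=
  mk fun i => if 3 ≤ i then tetraCoef (i - 1) / i else 0

theorem derivative_tetraPrimitive : d⁄dX ℚ tetraPrimitive = tetraSeries := by
  ext n
  rw [coeff_derivative, tetraPrimitive, tetraSeries, coeff_mk, coeff_mk]
  split_ifs with h3 h2 h2
  · rw [Nat.add_sub_cancel]
    push_cast
    field_simp
  · omega
  · omega
  · rw [zero_mul]

theorem tetraSeries_ode :
    60 * tetraPrimitive + tetraSeries + (27 * X ^ 2 - X) * d⁄dX ℚ tetraSeries
      - 54 * X * tetraSeries + 3 * X ^ 2 = 0 := by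
  ext n
  rcases n with _ | _ | _ | m <;>
  simp only [← map_ofNat (C (R := ℚ)), mul_assoc, sub_mul, map_add, map_sub, coeff_C_mul,
    coeff_X_pow_mul', coeff_X_pow, coeff_succ_X_mul, coeff_zero_X_mul, coeff_derivative,
    tetraSeries, tetraPrimitive, coeff_mk, map_zero]
  · simp
  · simp
  · norm_num [tetraCoef]
  · have hrec := mul_tetraCoef_add_three m
    simp only [show m + 1 + 1 + 1 = m + 3 by omega, show m + 3 - 2 + 1 = m + 2 by omega,
      show 2 ≤ m + 2 by omega, if_true, show m + 3 ≠ 2 by omega, if_false]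
    push_cast
    field_simp
    linear_combination -hrec

section Substitution

variable {S : Type*} [CommRing S] (f : ℚ →+* S) {R : S⟦X⟧}

theorem coeff_subst_tetraSeries (hR : constantCoeff R = 0) (n : ℕ) :
    coeff n ((map f tetraSeries).subst R)
      = ∑ i ∈ Finset.Icc 2 n, f (tetraCoef i) * coeff n (R ^ i) := by
  rw [coeff_subst_eq_sum_range hR]
  have hIcc : Finset.Icc 2 n ⊆ Finset.range (n + 1) := fun i hi => by
    simp only [Finset.mem_Icc, Finset.mem_range] at hi ⊢; omega
  rw [← Finset.sum_subset hIcc fun i hi' hi => ?_]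
  · refine Finset.sum_congr rfl fun i hi => ?_
    rw [tetraSeries, coeff_map, coeff_mk, if_pos (Finset.mem_Icc.mp hi).1, smul_eq_mul]
  · have : ¬2 ≤ i := fun h => hi (Finset.mem_Icc.mpr ⟨h, Finset.mem_range_succ_iff.mp hi'⟩)
    simp [tetraSeries, this]

theorem derivative_subst_tetraPrimitive (hR : HasSubst R) :
    d⁄dX S ((map f tetraPrimitive).subst R) = (map f tetraSeries).subst R * d⁄dX S R := by
  rw [derivative_subst hR, derivative_map, derivative_tetraPrimitive]

theorem tetraSeries_ode_subst (hR : HasSubst R) :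
    60 * (map f tetraPrimitive).subst R + (map f tetraSeries).subst R
      + (27 * R ^ 2 - R) * (d⁄dX S (map f tetraSeries)).subst R
      - 54 * R * (map f tetraSeries).subst R + 3 * R ^ 2 = 0 := by
  have h := congrArg (fun g => substAlgHom hR (map f g)) tetraSeries_ode
  simp only [map_add, map_sub, map_mul, map_pow, map_ofNat, map_X, map_zero,
    ← derivative_map] at h
  simpa only [coe_substAlgHom, subst_X hR] using h

end Substitution

theorem tetra_ode_of_relations {S : Type*} [CommRing S] {u z R A B F R' H H' H'' : S}
    (hRz : R = z + u * A) (hR' : R' * (1 - u * B) = 1)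
    (hode : 60 * F + A + (27 * R ^ 2 - R) * B - 54 * R * A + 3 * R ^ 2 = 0)
    (hH : H = 2 * F - u * A ^ 2) (hH' : H' = 2 * A) (hH'' : H'' = 2 * B * R') :
    3 * (u + 1) * u ^ 2 * H' ^ 2 * H'' + 12 * u ^ 2 * z * H' * H''
      + 6 * (u - 8) * u * H' ^ 2 + 240 * H + 4 * (6 * u * z - 54 * z + 1) * H'
      + 4 * (3 * u * z ^ 2 + 30 * u * H + 27 * z ^ 2 - z) * H'' + 24 * z ^ 2 = 0 := by
  subst hRz hH hH' hH''
  refine (IsUnit.of_mul_eq_one_right R' hR').mul_right_eq_zero.mp ?_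
  linear_combination 2 * B * (3 * (u + 1) * u ^ 2 * (2 * A) ^ 2 + 12 * u ^ 2 * z * (2 * A)
    + 4 * (3 * u * z ^ 2 + 30 * u * (2 * F - u * A ^ 2) + 27 * z ^ 2 - z)) * hR' + 8 * hode

-- Stated over a general `S`: on `ℚ[X]⟦X⟧` the instance `PowerSeries.algebraPolynomial` (where
-- `Polynomial.X` acts as the series variable) competes with the coefficientwise algebra structure
-- that `d⁄dX` is linear for.
theorem ode_of_tetraSeries_subst {S : Type*} [CommRing S] [IsDomain S] [CharZero S]
    (f : ℚ →+* S) {u : S} (hu : u ≠ 0) {R H : S⟦X⟧} (hR0 : constantCoeff R = 0)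
    (hR : R = X + C u * (map f tetraSeries).subst R) (hH0 : constantCoeff H = 0)
    (hH : C u * d⁄dX S H = 2 * (R - X)) :
    3 * (C u + 1) * C u ^ 2 * d⁄dX S H ^ 2 * d⁄dX S (d⁄dX S H)
      + 12 * C u ^ 2 * X * d⁄dX S H * d⁄dX S (d⁄dX S H)
      + 6 * (C u - 8) * C u * d⁄dX S H ^ 2 + 240 * H
      + 4 * (6 * C u * X - 54 * X + 1) * d⁄dX S H
      + 4 * (3 * C u * X ^ 2 + 30 * C u * H + 27 * X ^ 2 - X) * d⁄dX S (d⁄dX S H)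
      + 24 * X ^ 2 = 0 := by
  have hsubst : HasSubst R := .of_constantCoeff_zero' hR0
  set A : S⟦X⟧ := (map f tetraSeries).subst R
  set B : S⟦X⟧ := (d⁄dX S (map f tetraSeries)).subst R
  set F : S⟦X⟧ := (map f tetraPrimitive).subst R
  have hA' : d⁄dX S A = B * d⁄dX S R := derivative_subst hsubst
  have hR' : d⁄dX S R * (1 - C u * B) = 1 := by
    have h := congrArg (d⁄dX S) hR
    rw [map_add, Derivation.leibniz, derivative_X, hA', derivative_C, smul_zero, add_zero,
      smul_eq_mul] at h
    linear_combination h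
  have hH' : d⁄dX S H = 2 * A := mul_left_cancel₀ ((map_ne_zero_iff _ C_injective).mpr hu) (by
    rw [hH, hR]; ring)
  have hHF : H = 2 * F - C u * A ^ 2 := by
    refine derivative.ext ?_ ?_
    · rw [hH', map_sub, two_mul F, two_mul A, map_add, derivative_subst_tetraPrimitive _ hsubst,
        Derivation.leibniz, Derivation.leibniz_pow, hA', derivative_C]
      simp only [smul_eq_mul, nsmul_eq_mul]
      linear_combination (-2 * A) * hR'
    · have hA0 : constantCoeff A = 0 := constantCoeff_subst_eq_zero hR0 _
        (by simp [← coeff_zero_eq_constantCoeff_apply, tetraSeries])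
      have hF0 : constantCoeff F = 0 := constantCoeff_subst_eq_zero hR0 _
        (by simp [← coeff_zero_eq_constantCoeff_apply, tetraPrimitive])
      simp [hH0, hA0, hF0]
  have hH'' : d⁄dX S (d⁄dX S H) = 2 * B * d⁄dX S R := by
    rw [hH', two_mul, map_add, hA']; ring
  exact tetra_ode_of_relations hR hR' (tetraSeries_ode_subst f hsubst) hHF hH' hH''

/-- Let `φ(x) = Σ_{i≥2} (3i−3)!/(((i−1)!)²·i!)·x^i`, let `R ∈ (ℚ[u])[[z]]` be the unique
series with zero constant term satisfying `R = z + u·φ(R)` (stated coefficientwise; the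
truncation at `i ≤ n` is exact since `R` has order `≥ 1`), and let `H` be the unique series
with `H(0) = 0` and `u·H′ = 2(R−z)`.  Then `H` satisfies the stated second-order differential
equation of degree 3. -/
theorem stmt_10 (R H : PowerSeries (Polynomial ℚ))
    (hR0 : PowerSeries.constantCoeff R = 0)
    (hR : ∀ n : ℕ, PowerSeries.coeff n R
        = PowerSeries.coeff n PowerSeries.X
          + Polynomial.X * ∑ i ∈ Finset.Icc 2 n,
              Polynomial.C (tetraCoef i) * PowerSeries.coeff n (R ^ i))
    (hH0 : PowerSeries.constantCoeff H = 0)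
    (hH : PowerSeries.C Polynomial.X * PowerSeries.derivativeFun H
        = 2 * (R - PowerSeries.X)) :
    3 * ((PowerSeries.C Polynomial.X) + 1) *
          (PowerSeries.C Polynomial.X) ^ 2 *
          (PowerSeries.derivativeFun H) ^ 2 *
          (PowerSeries.derivativeFun (PowerSeries.derivativeFun H))
      + 12 * (PowerSeries.C Polynomial.X) ^ 2 * PowerSeries.X *
          (PowerSeries.derivativeFun H) *
          (PowerSeries.derivativeFun (PowerSeries.derivativeFun H))
      + 6 * ((PowerSeries.C Polynomial.X) - 8) *
          (PowerSeries.C Polynomial.X) * (PowerSeries.derivativeFun H) ^ 2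
      + 240 * H
      + 4 * (6 * (PowerSeries.C Polynomial.X) * PowerSeries.X
              - 54 * PowerSeries.X + 1) * (PowerSeries.derivativeFun H)
      + 4 * (3 * (PowerSeries.C Polynomial.X) * PowerSeries.X ^ 2
              + 30 * (PowerSeries.C Polynomial.X) * H
              + 27 * PowerSeries.X ^ 2 - PowerSeries.X) *
          (PowerSeries.derivativeFun (PowerSeries.derivativeFun H))
      + 24 * PowerSeries.X ^ 2
      = 0 := by
  refine ode_of_tetraSeries_subst Polynomial.C Polynomial.X_ne_zero hR0 (ext fun n => ?_) hH0 hH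
  rw [hR, map_add, coeff_C_mul, coeff_subst_tetraSeries _ hR0]
end

section
/- Let (d_k)_{k≥1} be nonnegative real numbers, not all zero, such that the power series D(y) = Σ_{k≥1} d_k·y^k has radius of convergence δ ∈ (0,+∞] and D(y) → +∞ as y → δ⁻. Then there exists a unique pair (κ,σ) of real numbers with 0 < κσ² < δ and σ > 1 such that σ·D(κσ²) + 1 = σ and 2κσ³·D′(κσ²) = 1. -/
open Filter Topology

/-- The function `y ↦ Σ_{k≥1} d_k y^k` (the sum of the series, where it converges). -/
noncomputable def Dfun (d : ℕ → ℝ) : ℝ → ℝ := fun y => ∑' k : ℕ, d k * y ^ k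

lemma aux_bound {a : ℕ → ℝ} {r : ℝ} (hr : Summable fun k => a k * r ^ k) :
    ∃ M, 0 ≤ M ∧ ∀ k, a k * r ^ k ≤ M := by
  obtain ⟨M, hM⟩ := hr.tendsto_atTop_zero.bddAbove_range
  exact ⟨max M 0, le_max_right _ _, fun k => le_trans (hM ⟨k, rfl⟩) (le_max_left _ _)⟩

lemma aux_G2 {a : ℕ → ℝ} (ha : ∀ k, 0 ≤ a k) {r y : ℝ}
    (hr : Summable fun k => a k * r ^ k) (hy : 0 ≤ y) (hyr : y < r) :
    Summable fun k : ℕ => ((k : ℝ) + 1) * a (k + 1) * y ^ k := by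
  have hr0 : 0 < r := lt_of_le_of_lt hy hyr
  obtain ⟨M, hM0, hM⟩ := aux_bound hr
  set t := y / r with ht
  have ht0 : 0 ≤ t := div_nonneg hy hr0.le
  have ht1 : t < 1 := (div_lt_one hr0).2 hyr
  have hsum : Summable fun k : ℕ => ((k : ℝ) + 1) * t ^ k := by
    have h1 := summable_pow_mul_geometric_of_norm_lt_one (R := ℝ) 1
      (r := t) (by rwa [Real.norm_eq_abs, abs_of_nonneg ht0])
    simpa [add_mul, one_mul, pow_one] using h1.add (summable_geometric_of_lt_one ht0 ht1)
  refine Summable.of_nonneg_of_le (fun k => ?_) (fun k => ?_) (hsum.mul_left (M / r))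
  · have : (0:ℝ) ≤ (k : ℝ) + 1 := by positivity
    exact mul_nonneg (mul_nonneg this (ha _)) (pow_nonneg hy _)
  · have hak : a (k + 1) ≤ M / r ^ (k + 1) :=
      (le_div_iff₀ (pow_pos hr0 _)).2 (hM (k + 1))
    calc ((k : ℝ) + 1) * a (k + 1) * y ^ k
        ≤ ((k : ℝ) + 1) * (M / r ^ (k + 1)) * y ^ k := by
          gcongr
      _ = M / r * (((k : ℝ) + 1) * t ^ k) := by
          rw [ht, div_pow]
          field_simp
          ring

lemma aux_G2' {a : ℕ → ℝ} (ha : ∀ k, 0 ≤ a k) {r y : ℝ}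
    (hr : Summable fun k => a k * r ^ k) (hy : 0 ≤ y) (hyr : y < r) :
    Summable fun k : ℕ => (k : ℝ) * a k * y ^ (k - 1) := by
  have h := aux_G2 ha hr hy hyr
  rw [← summable_nat_add_iff 1]
  simpa using h

lemma aux_G3 {a : ℕ → ℝ} (ha : ∀ k, 0 ≤ a k) {r y : ℝ}
    (hr : Summable fun k => a k * r ^ k) (hy : 0 ≤ y) (hyr : y < r) :
    HasDerivAt (Dfun a) (∑' k : ℕ, ((k : ℝ) + 1) * a (k + 1) * y ^ k) y := by
  have hr0 : 0 < r := lt_of_le_of_lt hy hyr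
  set ρ := (y + r) / 2 with hρ
  have hρ1 : y < ρ := by rw [hρ]; linarith
  have hρ2 : ρ < r := by rw [hρ]; linarith
  have hρ0 : 0 ≤ ρ := le_trans hy hρ1.le
  have hu : Summable fun k : ℕ => (k : ℝ) * a k * ρ ^ (k - 1) := aux_G2' ha hr hρ0 hρ2
  have h0mem : (0:ℝ) ∈ Set.Ioo (-ρ) ρ := ⟨by nlinarith, by nlinarith⟩
  have hymem : y ∈ Set.Ioo (-ρ) ρ := ⟨by nlinarith, hρ1⟩
  have hg0 : Summable fun n : ℕ => a n * (0:ℝ) ^ n := by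
    apply summable_of_ne_finset_zero (s := {0})
    intro n hn
    simp only [Finset.mem_singleton] at hn
    simp [zero_pow hn]
  have key := hasDerivAt_tsum_of_isPreconnected hu isOpen_Ioo
    (convex_Ioo (-ρ) ρ).isPreconnected
    (g := fun n z => a n * z ^ n)
    (g' := fun n z => a n * ((n : ℝ) * z ^ (n - 1)))
    (fun n z _ => (hasDerivAt_pow n z).const_mul (a n))
    (fun n z hz => ?_) h0mem hg0 hymem
  · have hs : Summable fun n : ℕ => a n * ((n : ℝ) * y ^ (n - 1)) := by
      have := aux_G2' ha hr hy hyr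
      apply this.congr
      intro n; ring
    have heq : (∑' n : ℕ, a n * ((n : ℝ) * y ^ (n - 1)))
        = ∑' k : ℕ, ((k : ℝ) + 1) * a (k + 1) * y ^ k := by
      rw [Summable.tsum_eq_zero_add hs]
      simp only [Nat.cast_zero, zero_mul, mul_zero, zero_add]
      congr 1
      funext n
      push_cast
      ring_nf
    rw [heq] at key
    exact key
  · have hz' : |z| ≤ ρ := le_of_lt (abs_lt.2 ⟨hz.1, hz.2⟩)
    rw [Real.norm_eq_abs, abs_mul, abs_mul, abs_of_nonneg (ha n), Nat.abs_cast, abs_pow]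
    calc a n * ((n : ℝ) * |z| ^ (n - 1)) ≤ a n * ((n : ℝ) * ρ ^ (n - 1)) := by
          exact mul_le_mul_of_nonneg_left (mul_le_mul_of_nonneg_left
            (pow_le_pow_left₀ (abs_nonneg z) hz' _) (Nat.cast_nonneg n)) (ha n)
      _ = (n : ℝ) * a n * ρ ^ (n - 1) := by ring

lemma aux_exists_between {y : ℝ} {δ : ENNReal} (hy : 0 ≤ y) (h : ENNReal.ofReal y < δ) :
    ∃ r, y < r ∧ ENNReal.ofReal r < δ := by
  rcases eq_or_ne δ ⊤ with htop | hne
  · exact ⟨y + 1, by linarith, by simp [htop]⟩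
  · have h2 : ENNReal.ofReal y < ENNReal.ofReal δ.toReal := by
      rwa [ENNReal.ofReal_toReal hne]
    have hyt : y < δ.toReal := (ENNReal.ofReal_lt_ofReal_iff_of_nonneg hy).1 h2
    refine ⟨(y + δ.toReal) / 2, by linarith, ?_⟩
    have h3 : ENNReal.ofReal ((y + δ.toReal) / 2) < ENNReal.ofReal δ.toReal :=
      (ENNReal.ofReal_lt_ofReal_iff (by linarith)).2 (by linarith)
    exact h3.trans_le (le_of_eq (ENNReal.ofReal_toReal hne))

/-- the shifted coefficients of the derivative series -/
noncomputable def dshift (d : ℕ → ℝ) : ℕ → ℝ := fun k => ((k : ℝ) + 1) * d (k + 1)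

/-- Let `(d_k)_{k≥1}` be nonnegative reals, not all zero, whose generating series
`D(y) = Σ_{k≥1} d_k y^k` has radius of convergence `δ ∈ (0,+∞]` and satisfies `D(y) → +∞`
as `y → δ⁻`.  Then there is a unique pair `(κ,σ)` with `0 < κσ² < δ` and `σ > 1` such that
`σ·D(κσ²) + 1 = σ` and `2κσ³·D′(κσ²) = 1`. -/
theorem stmt_11 (d : ℕ → ℝ) (hd0 : d 0 = 0) (hdnn : ∀ k, 0 ≤ d k)
    (hdne : ∃ k, 1 ≤ k ∧ d k ≠ 0)
    (δ : ENNReal) (hδ : 0 < δ)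
    (hrad : ∀ y : ℝ, 0 ≤ y →
      (ENNReal.ofReal y < δ → Summable (fun k : ℕ => d k * y ^ k)) ∧
      (δ < ENNReal.ofReal y → ¬ Summable (fun k : ℕ => d k * y ^ k)))
    (hdiv : Tendsto (Dfun d)
      (if δ = ⊤ then atTop else 𝓝[<] δ.toReal) atTop) :
    ∃! p : ℝ × ℝ,
      (0 < p.1 * p.2 ^ 2 ∧ ENNReal.ofReal (p.1 * p.2 ^ 2) < δ ∧ 1 < p.2) ∧
      p.2 * Dfun d (p.1 * p.2 ^ 2) + 1 = p.2 ∧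
      2 * p.1 * p.2 ^ 3 * deriv (Dfun d) (p.1 * p.2 ^ 2) = 1 := by
  classical
  obtain ⟨k₀, hk₀1, hk₀⟩ := hdne
  have hdk₀ : 0 < d k₀ := lt_of_le_of_ne (hdnn k₀) (Ne.symm hk₀)
  have hd'nn : ∀ k, 0 ≤ dshift d k :=
    fun k => mul_nonneg (by positivity) (hdnn _)
  set s : Set ℝ := {y : ℝ | 0 ≤ y ∧ ENNReal.ofReal y < δ} with hs
  have hsummD : ∀ y ∈ s, Summable fun k => d k * y ^ k := fun y hy => (hrad y hy.1).1 hy.2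
  have hsummE : ∀ y ∈ s, Summable fun k => dshift d k * y ^ k := by
    intro y hy
    obtain ⟨r, hr1, hr2⟩ := aux_exists_between hy.1 hy.2
    have hrs : Summable fun k => d k * r ^ k := (hrad r (le_trans hy.1 hr1.le)).1 hr2
    exact aux_G2 hdnn hrs hy.1 hr1
  have hDderiv : ∀ y ∈ s, HasDerivAt (Dfun d) (Dfun (dshift d) y) y := by
    intro y hy
    obtain ⟨r, hr1, hr2⟩ := aux_exists_between hy.1 hy.2
    have hrs : Summable fun k => d k * r ^ k := (hrad r (le_trans hy.1 hr1.le)).1 hr2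
    exact aux_G3 hdnn hrs hy.1 hr1
  have hEdiff : ∀ y ∈ s, ContinuousAt (Dfun (dshift d)) y := by
    intro y hy
    obtain ⟨r1, hr11, hr12⟩ := aux_exists_between hy.1 hy.2
    obtain ⟨r2, hr21, hr22⟩ := aux_exists_between (le_trans hy.1 hr11.le) hr12
    have hrs : Summable fun k => d k * r2 ^ k :=
      (hrad r2 (by linarith [hy.1])).1 hr22
    have h1 : Summable fun k => dshift d k * r1 ^ k :=
      aux_G2 hdnn hrs (le_trans hy.1 hr11.le) hr21
    exact (aux_G3 hd'nn h1 hy.1 hr11).continuousAt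
  set F : ℝ → ℝ := fun y => Dfun d y + 2 * y * Dfun (dshift d) y with hF
  have hcontF : ∀ y ∈ s, ContinuousAt F y := fun y hy =>
    ((hDderiv y hy).continuousAt).add
      (((continuousAt_const.mul continuousAt_id)).mul (hEdiff y hy))
  have hD0 : Dfun d 0 = 0 := by
    have h0 : (fun k : ℕ => d k * (0:ℝ) ^ k) = fun _ => 0 := by
      funext k
      rcases Nat.eq_zero_or_pos k with h | h
      · simp [h, hd0]
      · simp [zero_pow (Nat.pos_iff_ne_zero.mp h)]
    simp [Dfun, h0]
  have hDmono : StrictMonoOn (Dfun d) s := by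
    intro a ha b hb hab
    apply Summable.tsum_lt_tsum (i := k₀)
    · intro k; exact mul_le_mul_of_nonneg_left (pow_le_pow_left₀ ha.1 hab.le k) (hdnn k)
    · exact (mul_lt_mul_iff_right₀ hdk₀).2 (pow_lt_pow_left₀ hab ha.1 (by omega))
    · exact hsummD a ha
    · exact hsummD b hb
  have hEnn : ∀ y ∈ s, 0 ≤ Dfun (dshift d) y := fun y hy =>
    tsum_nonneg fun k => mul_nonneg (hd'nn k) (pow_nonneg hy.1 _)
  have hEmono : ∀ a ∈ s, ∀ b ∈ s, a ≤ b → Dfun (dshift d) a ≤ Dfun (dshift d) b := by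
    intro a ha b hb hab
    exact Summable.tsum_le_tsum
      (fun k => mul_le_mul_of_nonneg_left (pow_le_pow_left₀ ha.1 hab k) (hd'nn k))
      (hsummE a ha) (hsummE b hb)
  have hEpos : ∀ y ∈ s, 0 < y → 0 < Dfun (dshift d) y := by
    intro y hy hy0
    refine Summable.tsum_pos (hsummE y hy)
      (fun k => mul_nonneg (hd'nn k) (pow_nonneg hy.1 _)) (k₀ - 1) ?_
    have hk : k₀ - 1 + 1 = k₀ := Nat.succ_pred_eq_of_pos hk₀1
    show 0 < ((↑(k₀ - 1) : ℝ) + 1) * d (k₀ - 1 + 1) * y ^ (k₀ - 1)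
    rw [hk]
    have : (0:ℝ) < (↑(k₀ - 1) : ℝ) + 1 := by positivity
    positivity
  have hDpos : ∀ y ∈ s, 0 < y → 0 < Dfun d y := by
    intro y hy hy0
    refine Summable.tsum_pos (hsummD y hy)
      (fun k => mul_nonneg (hdnn k) (pow_nonneg hy.1 _)) k₀ ?_
    positivity
  have hFmono : StrictMonoOn F s := by
    intro a ha b hb hab
    have h1 : Dfun d a < Dfun d b := hDmono ha hb hab
    have h2 : 2 * a * Dfun (dshift d) a ≤ 2 * b * Dfun (dshift d) b := by
      have h3 := hEmono a ha b hb hab.le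
      have h4 := hEnn a ha
      nlinarith [ha.1]
    show Dfun d a + 2 * a * Dfun (dshift d) a < Dfun d b + 2 * b * Dfun (dshift d) b
    linarith
  obtain ⟨b, hb0, hbδ, hbD⟩ : ∃ b : ℝ, 0 < b ∧ ENNReal.ofReal b < δ ∧ 1 ≤ Dfun d b := by
    by_cases hδt : δ = ⊤
    · rw [if_pos hδt] at hdiv
      obtain ⟨b, hb1, hb2⟩ :=
        ((hdiv.eventually (eventually_ge_atTop (1:ℝ))).and (eventually_ge_atTop (1:ℝ))).exists
      exact ⟨b, by linarith, by simp [hδt], hb1⟩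
    · rw [if_neg hδt] at hdiv
      have htpos : 0 < δ.toReal := ENNReal.toReal_pos hδ.ne' hδt
      have h1 : ∀ᶠ y in 𝓝[<] δ.toReal, 1 ≤ Dfun d y :=
        hdiv.eventually (eventually_ge_atTop (1:ℝ))
      have h2 : Set.Ioo 0 δ.toReal ∈ 𝓝[<] δ.toReal :=
        Ioo_mem_nhdsLT_of_mem ⟨htpos, le_refl _⟩
      obtain ⟨b, hb1, hb2⟩ := (h1.and h2).exists
      refine ⟨b, hb2.1, ?_, hb1⟩
      have h3 : ENNReal.ofReal b < ENNReal.ofReal δ.toReal :=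
        (ENNReal.ofReal_lt_ofReal_iff htpos).2 hb2.2
      exact h3.trans_le (le_of_eq (ENNReal.ofReal_toReal hδt))
  have hbs : b ∈ s := ⟨hb0.le, hbδ⟩
  have hsub : Set.Icc 0 b ⊆ s := fun y hy =>
    ⟨hy.1, lt_of_le_of_lt (ENNReal.ofReal_le_ofReal hy.2) hbδ⟩
  have hcont : ContinuousOn F (Set.Icc 0 b) := fun y hy =>
    (hcontF y (hsub hy)).continuousWithinAt
  have hF0 : F 0 = 0 := by simp [hF, hD0]
  have hFb : 1 ≤ F b := by
    have h4 := hEnn b hbs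
    show 1 ≤ Dfun d b + 2 * b * Dfun (dshift d) b
    nlinarith [hb0]
  obtain ⟨x, hxmem, hFx⟩ := intermediate_value_Icc hb0.le hcont
    (show (1:ℝ) ∈ Set.Icc (F 0) (F b) from by rw [hF0]; exact ⟨zero_le_one, hFb⟩)
  have hxs : x ∈ s := hsub hxmem
  have hx0 : 0 < x := by
    rcases eq_or_lt_of_le hxmem.1 with h | h
    · exfalso; rw [← h, hF0] at hFx; norm_num at hFx
    · exact h
  have hkey : Dfun d x + 2 * x * Dfun (dshift d) x = 1 := hFx
  have hExpos : 0 < Dfun (dshift d) x := hEpos x hxs hx0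
  have hDxpos : 0 < Dfun d x := hDpos x hxs hx0
  have hDx1 : Dfun d x < 1 := by nlinarith
  set σ : ℝ := (1 - Dfun d x)⁻¹ with hσdef
  have h1Dx : 0 < 1 - Dfun d x := by linarith
  have hσpos : 0 < σ := inv_pos.2 h1Dx
  have hσ1 : 1 < σ := (one_lt_inv₀ h1Dx).2 (by linarith)
  have hσinv : σ * (1 - Dfun d x) = 1 := inv_mul_cancel₀ h1Dx.ne'
  set κ : ℝ := x / σ ^ 2 with hκdef
  have hxeq : κ * σ ^ 2 = x := div_mul_cancel₀ x (by positivity)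
  refine ⟨(κ, σ), ⟨⟨?_, ?_, hσ1⟩, ?_, ?_⟩, ?_⟩
  · show 0 < κ * σ ^ 2
    rw [hxeq]; exact hx0
  · show ENNReal.ofReal (κ * σ ^ 2) < δ
    rw [hxeq]; exact hxs.2
  · show σ * Dfun d (κ * σ ^ 2) + 1 = σ
    rw [hxeq]
    linear_combination -hσinv
  · show 2 * κ * σ ^ 3 * deriv (Dfun d) (κ * σ ^ 2) = 1
    rw [hxeq, (hDderiv x hxs).deriv]
    have h2 : 2 * x * Dfun (dshift d) x = 1 - Dfun d x := by linarith
    have h5 : 2 * κ * σ ^ 3 * Dfun (dshift d) x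
        = (2 * x * Dfun (dshift d) x) * σ := by
      rw [hκdef]; field_simp
    rw [h5, h2]
    linear_combination hσinv
  · rintro ⟨κ', σ'⟩ ⟨⟨hpos', hlt', hσ'1⟩, heq1, heq2⟩
    dsimp only at hpos' hlt' hσ'1 heq1 heq2 ⊢
    have hx's : κ' * σ' ^ 2 ∈ s := ⟨hpos'.le, hlt'⟩
    have hσ'pos : (0:ℝ) < σ' := by linarith
    rw [(hDderiv _ hx's).deriv] at heq2
    have hB : 2 * (κ' * σ' ^ 2) * σ' * Dfun (dshift d) (κ' * σ' ^ 2) = 1 := by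
      linear_combination heq2
    have hFx' : F (κ' * σ' ^ 2) = 1 := by
      have hgoal : σ' * F (κ' * σ' ^ 2) = σ' * 1 := by
        show σ' * (Dfun d (κ' * σ' ^ 2)
          + 2 * (κ' * σ' ^ 2) * Dfun (dshift d) (κ' * σ' ^ 2)) = σ' * 1
        linear_combination heq1 + hB
      exact mul_left_cancel₀ hσ'pos.ne' hgoal
    have hxx : κ' * σ' ^ 2 = x :=
      hFmono.injOn hx's hxs (hFx'.trans hFx.symm)
    rw [hxx] at heq1
    have hA : σ' * (1 - Dfun d x) = 1 := by linear_combination -heq1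
    have hσ'σ : σ' = σ := by
      rw [hσdef]
      exact eq_inv_of_mul_eq_one_left (by linear_combination hA)
    have hκ'κ : κ' = κ := by
      have h6 : κ' = (κ' * σ' ^ 2) / σ' ^ 2 := by field_simp
      rw [h6, hxx, hσ'σ, hκdef]
    simp only [Prod.mk.injEq]
    exact ⟨hκ'κ, hσ'σ⟩
end

section
/- Let M be a matroid on a finite ground set E with m = |E| ≥ 1, and let Δ be a decision function for M. For each base B of M, let 𝓘(B) be the set of Δ-active elements belonging to B and 𝓔(B) the set of Δ-active elements not in B. Then the subset intervals [B ∖ 𝓘(B), B ∪ 𝓔(B)] := {A ⊆ E : B ∖ 𝓘(B) ⊆ A ⊆ B ∪ 𝓔(B)}, indexed by the bases B of M, form a partition of the power set of E; equivalently, for every A ⊆ E there is exactly one base B of M with B ∖ 𝓘(B) ⊆ A ⊆ B ∪ 𝓔(B). -/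
open Matroid
open scoped Classical

/-- The rank of a set in a matroid: the largest cardinality of an independent subset. -/
noncomputable def mRank {α : Type*} (M : Matroid α) (A : Set α) : ℕ :=
  sSup {n : ℕ | ∃ I : Set α, M.Indep I ∧ I ⊆ A ∧ I.ncard = n}

/-- `e` is a loop of `M`. -/
def mLoop {α : Type*} (M : Matroid α) (e : α) : Prop :=
  e ∈ M.E ∧ ¬ M.Indep {e}

/-- `e` is a coloop of `M` (an element of every base). -/
def mColoop {α : Type*} (M : Matroid α) (e : α) : Prop :=
  e ∈ M.E ∧ ∀ B : Set α, M.IsBase B → e ∈ B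

/-- Deletion of the element `e` from `M`. -/
def mDel {α : Type*} (M : Matroid α) (e : α) : Matroid α :=
  M ↾ (M.E \ {e})

/-- Contraction of the element `e` in `M`. -/
def mCon {α : Type*} (M : Matroid α) (e : α) : Matroid α :=
  (M✶ ↾ (M.E \ {e}))✶

/-- One step of the resolution algorithm: given the current minor and the list of directions
taken so far, query the decision function and delete/contract accordingly
(`false` = ℓ, `true` = r). -/
noncomputable def mStep {α : Type*} (S : Set α) (Δ : List Bool → α) :
    Matroid α × List Bool → Matroid α × List Bool := fun p =>
  if mLoop p.1 (Δ p.2) then (mDel p.1 (Δ p.2), p.2 ++ [false])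
  else if mColoop p.1 (Δ p.2) then (mCon p.1 (Δ p.2), p.2 ++ [true])
  else if Δ p.2 ∈ S then (mCon p.1 (Δ p.2), p.2 ++ [true])
  else (mDel p.1 (Δ p.2), p.2 ++ [false])

/-- The set of `Δ`-active elements of `S`: elements that are a loop or a coloop of the
current minor at the time they are visited. -/
noncomputable def mActive {α : Type*} (M : Matroid α) (m : ℕ) (Δ : List Bool → α)
    (S : Set α) : Set α :=
  {x : α | ∃ k : ℕ, k < m ∧
    x = Δ ((mStep S Δ)^[k] (M, ([] : List Bool))).2 ∧
    (mLoop ((mStep S Δ)^[k] (M, ([] : List Bool))).1 x ∨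
      mColoop ((mStep S Δ)^[k] (M, ([] : List Bool))).1 x)}

/-- `Δ` is a decision function for `M` (with `m` elements): values lie in the ground set, and
along each branch no element is repeated. -/
def IsDecisionFunction {α : Type*} (M : Matroid α) (m : ℕ) (Δ : List Bool → α) : Prop :=
  (∀ L : List Bool, L.length < m → Δ L ∈ M.E) ∧
  (∀ L L' : List Bool, L.length < m → L' <+: L → L' ≠ L → Δ L' ≠ Δ L)


/-!
Run the resolution algorithm on a set `S`. Each step contracts a non-loop or deletes a
non-coloop of the current minor, so as long as a set `X` agrees with the decisions taken so far,
`X` is a base of `M` iff `X` minus the visited elements is a base of the current minor. The final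
minor is empty; hence the contracted elements form a base `B(S)`, and the run on a base `B`
contracts exactly `B`.

The run consults `S` only at elements that are neither loops nor coloops when visited, i.e. at
non-active ones, so sets that agree outside the active elements of one of them have the same run.
The interval condition for a base `B` says exactly that `A` and `B` agree outside the active
elements of `B`; it therefore holds for `B(A)`, and for any `B` satisfying it `B = B(B) = B(A)`.
-/

lemma Set.diff_inter_subset_and_subset_union_diff_iff {α : Type*} {A B T : Set α} :
    (B \ (T ∩ B) ⊆ A ∧ A ⊆ B ∪ (T \ B)) ↔ ∀ x ∉ T, (x ∈ B ↔ x ∈ A) := by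
  simp only [Set.subset_def, Set.mem_sdiff, Set.mem_inter_iff, Set.mem_union]
  grind

namespace Matroid

variable {α : Type*} {M : Matroid α} {e : α} {X : Set α}

lemma IsNonloop.contractElem_isBase_diff_iff (he : M.IsNonloop e) (heX : e ∈ X) :
    (M ／ {e}).IsBase (X \ {e}) ↔ M.IsBase X := by
  rw [(indep_singleton.2 he).contract_isBase_iff, Set.sdiff_union_of_subset
    (Set.singleton_subset_iff.2 heX)]
  simp

lemma deleteElem_isBase_iff_of_not_isColoop (he : ¬ M.IsColoop e) (heE : e ∈ M.E)
    (heX : e ∉ X) : (M ＼ {e}).IsBase X ↔ M.IsBase X := by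
  have hcoindep : M.Coindep {e} := by
    rw [coindep_def, indep_singleton, ← not_isLoop_iff (by exact heE),
      dual_isLoop_iff_isColoop]
    exact he
  rw [hcoindep.delete_isBase_iff, Set.disjoint_singleton_right, and_iff_left heX]

lemma isBase_empty_of_ground_eq_empty (h : M.E = ∅) : M.IsBase ∅ := by
  rw [ground_eq_empty_iff] at h
  subst h
  simp

end Matroid

section Bridge

variable {α : Type*} {M : Matroid α} {e : α}

lemma mLoop_iff : mLoop M e ↔ M.IsLoop e := by
  refine ⟨fun ⟨he, hi⟩ => ?_, fun h => ⟨h.mem_ground, fun hi => ?_⟩⟩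
  · rwa [indep_singleton, not_isNonloop_iff he] at hi
  · exact (indep_singleton.1 hi).not_isLoop h

lemma mColoop_iff : mColoop M e ↔ M.IsColoop e := by
  rw [isColoop_iff_forall_mem_isBase]
  refine ⟨fun h B hB => h.2 B hB, fun h => ⟨?_, fun B hB => h hB⟩⟩
  obtain ⟨B, hB⟩ := M.exists_isBase
  exact hB.subset_ground (h hB)

lemma mDel_eq (M : Matroid α) (e : α) : mDel M e = M ＼ {e} := rfl

lemma mCon_eq (M : Matroid α) (e : α) : mCon M e = M ／ {e} := rfl

end Bridge

namespace Resolution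

variable {α : Type*}

variable (M : Matroid α) (Δ : List Bool → α) (S : Set α)

-- In the paper's 1-based numbering, `run M Δ S k = (M_{k+1}, [d_1, …, d_k])` and
-- `visited M Δ S k = e_{k+1}`.
noncomputable def run (k : ℕ) : Matroid α × List Bool :=
  (mStep S Δ)^[k] (M, [])

noncomputable def visited (k : ℕ) : α :=
  Δ (run M Δ S k).2

-- Types I and Si; otherwise the step deletes (types L and Se).
def ContractsAt (k : ℕ) : Prop :=
  (run M Δ S k).1.IsColoop (visited M Δ S k) ∨
    (¬ (run M Δ S k).1.IsLoop (visited M Δ S k) ∧ visited M Δ S k ∈ S)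

noncomputable def contracted (m : ℕ) : Set α :=
  visited M Δ S '' {k | k < m ∧ ContractsAt M Δ S k}

variable {M Δ S}

lemma run_succ (k : ℕ) : run M Δ S (k + 1) =
    if ContractsAt M Δ S k then ((run M Δ S k).1 ／ {visited M Δ S k}, (run M Δ S k).2 ++ [true])
    else ((run M Δ S k).1 ＼ {visited M Δ S k}, (run M Δ S k).2 ++ [false]) := by
  rw [run, Function.iterate_succ_apply', ← run]
  unfold mStep ContractsAt visited
  simp only [mLoop_iff, mColoop_iff, mCon_eq, mDel_eq]
  split_ifs <;> first | rfl | grind [Matroid.IsLoop.not_isColoop]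

lemma run_succ_fst (k : ℕ) : (run M Δ S (k + 1)).1 =
    if ContractsAt M Δ S k then (run M Δ S k).1 ／ {visited M Δ S k}
    else (run M Δ S k).1 ＼ {visited M Δ S k} := by
  rw [run_succ]; split_ifs <;> rfl

lemma run_succ_snd (k : ℕ) :
    (run M Δ S (k + 1)).2 = (run M Δ S k).2 ++ [decide (ContractsAt M Δ S k)] := by
  rw [run_succ]; split_ifs with h <;> simp [h]

lemma length_run_snd (k : ℕ) : (run M Δ S k).2.length = k := by
  induction k with
  | zero => rfl
  | succ k ih => simp [run_succ_snd, ih]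

lemma run_snd_prefix {i k : ℕ} (h : i ≤ k) : (run M Δ S i).2 <+: (run M Δ S k).2 := by
  induction k, h using Nat.le_induction with
  | base => exact List.prefix_refl _
  | succ k _ ih => exact ih.trans (by rw [run_succ_snd]; exact List.prefix_append _ _)

lemma image_Iio_succ (f : ℕ → α) (k : ℕ) : f '' Set.Iio (k + 1) = f '' Set.Iio k ∪ {f k} := by
  rw [Set.Iio_add_one_eq_Iic, ← Set.Iio_insert, Set.image_insert_eq, Set.union_singleton]

lemma run_ground (k : ℕ) : (run M Δ S k).1.E = M.E \ visited M Δ S '' Set.Iio k := by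
  induction k with
  | zero => simp [run]
  | succ k ih =>
    rw [run_succ_fst, image_Iio_succ, ← Set.sdiff_sdiff, ← ih]
    split_ifs <;> rfl

variable {m : ℕ}

lemma visited_mem_ground (hΔ : IsDecisionFunction M m Δ) {k : ℕ} (hk : k < m) :
    visited M Δ S k ∈ M.E :=
  hΔ.1 _ (by rwa [length_run_snd])

lemma visited_injOn (hΔ : IsDecisionFunction M m Δ) : Set.InjOn (visited M Δ S) (Set.Iio m) := by
  intro i hi k hk h
  by_contra hne
  wlog hik : i < k generalizing i k
  · exact this hk hi h.symm (Ne.symm hne) (by omega)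
  refine hΔ.2 _ _ (by rwa [length_run_snd]) (run_snd_prefix hik.le) (fun heq => ?_) h
  have := congrArg List.length heq
  simp only [length_run_snd] at this
  omega

lemma visited_notMem_image_Iio (hΔ : IsDecisionFunction M m Δ) {k : ℕ} (hk : k < m) :
    visited M Δ S k ∉ visited M Δ S '' Set.Iio k := by
  rintro ⟨i, hi, h⟩
  exact (Set.mem_Iio.1 hi).ne (visited_injOn hΔ (hi.trans hk) hk h)

lemma visited_mem_run_ground (hΔ : IsDecisionFunction M m Δ) {k : ℕ} (hk : k < m) :
    visited M Δ S k ∈ (run M Δ S k).1.E := by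
  rw [run_ground]
  exact ⟨visited_mem_ground hΔ hk, visited_notMem_image_Iio hΔ hk⟩

lemma image_visited_Iio_eq_ground (hE : M.E.Finite) (hΔ : IsDecisionFunction M M.E.ncard Δ) :
    visited M Δ S '' Set.Iio M.E.ncard = M.E := by
  refine Set.eq_of_subset_of_ncard_le ?_ ?_ hE
  · rintro _ ⟨k, hk, rfl⟩
    exact visited_mem_ground hΔ hk
  · rw [(visited_injOn hΔ).ncard_image]
    simp

lemma run_ground_eq_empty (hE : M.E.Finite) (hΔ : IsDecisionFunction M M.E.ncard Δ) :
    (run M Δ S M.E.ncard).1.E = ∅ := by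
  rw [run_ground, image_visited_Iio_eq_ground hE hΔ, Set.sdiff_self]

lemma visited_congr {S' : Set α} {k : ℕ} (h : run M Δ S k = run M Δ S' k) :
    visited M Δ S k = visited M Δ S' k := by
  rw [visited, visited, h]

lemma contractsAt_congr {S' : Set α} {k : ℕ} (h : run M Δ S (k + 1) = run M Δ S' (k + 1)) :
    ContractsAt M Δ S k ↔ ContractsAt M Δ S' k := by
  have h' := congrArg Prod.snd h
  rw [run_succ_snd, run_succ_snd] at h'
  simpa using (List.append_inj' h' rfl).2

lemma run_congr {S' : Set α}
    (h : ∀ k < m, ¬ (run M Δ S k).1.IsLoop (visited M Δ S k) →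
      ¬ (run M Δ S k).1.IsColoop (visited M Δ S k) →
      (visited M Δ S k ∈ S ↔ visited M Δ S k ∈ S')) :
    ∀ k ≤ m, run M Δ S k = run M Δ S' k := by
  intro k hk
  induction k with
  | zero => rfl
  | succ k ih =>
    have hrun := ih (Nat.le_of_succ_le hk)
    have hcon : ContractsAt M Δ S k ↔ ContractsAt M Δ S' k := by
      unfold ContractsAt
      rw [← hrun, ← visited_congr hrun]
      have := h k hk
      tauto
    rw [run_succ, run_succ, ← hrun, ← visited_congr hrun]
    simp only [hcon]

lemma run_succ_isBase_iff (hΔ : IsDecisionFunction M m Δ) {k : ℕ} (hk : k < m) {Y : Set α}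
    (hY : visited M Δ S k ∈ Y ↔ ContractsAt M Δ S k) :
    (run M Δ S (k + 1)).1.IsBase (Y \ {visited M Δ S k}) ↔ (run M Δ S k).1.IsBase Y := by
  have he := visited_mem_run_ground (S := S) hΔ hk
  rw [run_succ_fst]
  split_ifs with hc
  · refine IsNonloop.contractElem_isBase_diff_iff ?_ (hY.2 hc)
    rcases hc with hcol | ⟨hnl, -⟩
    · exact hcol.isNonloop
    · exact (not_isLoop_iff he).1 hnl
  · have heY : visited M Δ S k ∉ Y := fun h => hc (hY.1 h)
    rw [Set.sdiff_singleton_eq_self heY]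
    exact deleteElem_isBase_iff_of_not_isColoop (fun h => hc (Or.inl h)) he heY

lemma isBase_iff_run_isBase (hΔ : IsDecisionFunction M m Δ) {X : Set α} {k : ℕ} (hk : k ≤ m)
    (hX : ∀ i < k, visited M Δ S i ∈ X ↔ ContractsAt M Δ S i) :
    M.IsBase X ↔ (run M Δ S k).1.IsBase (X \ visited M Δ S '' Set.Iio k) := by
  induction k with
  | zero => simp [run]
  | succ k ih =>
    have hk' : k < m := hk
    rw [ih hk'.le (fun i hi => hX i (hi.trans k.lt_succ_self)), image_Iio_succ,
      ← Set.sdiff_sdiff, run_succ_isBase_iff hΔ hk']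
    rw [Set.mem_sdiff, and_iff_left (visited_notMem_image_Iio hΔ hk')]
    exact hX k k.lt_succ_self

lemma isBase_of_forall_visited_mem_iff (hE : M.E.Finite)
    (hΔ : IsDecisionFunction M M.E.ncard Δ) {X : Set α} (hXE : X ⊆ M.E)
    (hX : ∀ k < M.E.ncard, visited M Δ S k ∈ X ↔ ContractsAt M Δ S k) : M.IsBase X := by
  rw [isBase_iff_run_isBase hΔ le_rfl hX, image_visited_Iio_eq_ground hE hΔ,
    Set.sdiff_eq_empty.2 hXE]
  exact isBase_empty_of_ground_eq_empty (run_ground_eq_empty hE hΔ)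

lemma contracted_subset_ground (hΔ : IsDecisionFunction M m Δ) : contracted M Δ S m ⊆ M.E := by
  rintro _ ⟨k, ⟨hk, -⟩, rfl⟩
  exact visited_mem_ground hΔ hk

lemma visited_mem_contracted_iff (hΔ : IsDecisionFunction M m Δ) {k : ℕ} (hk : k < m) :
    visited M Δ S k ∈ contracted M Δ S m ↔ ContractsAt M Δ S k := by
  refine ⟨?_, fun hc => ⟨k, ⟨hk, hc⟩, rfl⟩⟩
  rintro ⟨i, ⟨hi, hc⟩, h⟩
  rwa [visited_injOn hΔ hi hk h] at hc

lemma contracted_isBase (hE : M.E.Finite) (hΔ : IsDecisionFunction M M.E.ncard Δ) :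
    M.IsBase (contracted M Δ S M.E.ncard) :=
  isBase_of_forall_visited_mem_iff hE hΔ (contracted_subset_ground hΔ)
    fun _ hk => visited_mem_contracted_iff hΔ hk

lemma visited_mem_iff_contractsAt_of_isBase (hΔ : IsDecisionFunction M m Δ) {B : Set α}
    (hB : M.IsBase B) {k : ℕ} (hk : k < m) :
    visited M Δ B k ∈ B ↔ ContractsAt M Δ B k := by
  induction k using Nat.strong_induction_on with
  | _ k ih =>
  have hbase := (isBase_iff_run_isBase hΔ hk.le fun i hi => ih i hi (hi.trans hk)).1 hB
  have hmem : visited M Δ B k ∈ B ↔ visited M Δ B k ∈ B \ visited M Δ B '' Set.Iio k :=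
    (and_iff_left (visited_notMem_image_Iio hΔ hk)).symm
  refine ⟨fun h => Or.inr ⟨fun hl => ?_, h⟩, ?_⟩
  · exact hl.not_isNonloop (hbase.indep.isNonloop_of_mem (hmem.1 h))
  · rintro (hcol | ⟨-, h⟩)
    · exact hmem.2 (hbase.mem_of_isColoop hcol)
    · exact h

lemma contracted_eq_of_isBase (hE : M.E.Finite) (hΔ : IsDecisionFunction M M.E.ncard Δ)
    {B : Set α} (hB : M.IsBase B) : contracted M Δ B M.E.ncard = B := by
  ext x
  refine ⟨?_, fun hx => ?_⟩
  · rintro ⟨k, ⟨hk, hc⟩, rfl⟩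
    exact (visited_mem_iff_contractsAt_of_isBase hΔ hB hk).2 hc
  · obtain ⟨k, hk, rfl⟩ := (image_visited_Iio_eq_ground hE hΔ (S := B)).symm ▸ hB.subset_ground hx
    exact ⟨k, ⟨hk, (visited_mem_iff_contractsAt_of_isBase hΔ hB hk).1 hx⟩, rfl⟩

lemma contracted_congr {S' : Set α} (h : ∀ k ≤ m, run M Δ S k = run M Δ S' k) :
    contracted M Δ S m = contracted M Δ S' m := by
  ext x
  refine exists_congr fun k => ?_
  constructor <;> rintro ⟨⟨hk, hc⟩, rfl⟩
  · exact ⟨⟨hk, (contractsAt_congr (h _ hk)).1 hc⟩, (visited_congr (h k hk.le)).symm⟩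
  · exact ⟨⟨hk, (contractsAt_congr (h _ hk)).2 hc⟩, visited_congr (h k hk.le)⟩

lemma mem_mActive_iff {x : α} : x ∈ mActive M m Δ S ↔ ∃ k < m, x = visited M Δ S k ∧
    ((run M Δ S k).1.IsLoop x ∨ (run M Δ S k).1.IsColoop x) := by
  simp only [mActive, mLoop_iff, mColoop_iff]
  rfl

lemma visited_mem_mActive_iff (hΔ : IsDecisionFunction M m Δ) {k : ℕ} (hk : k < m) :
    visited M Δ S k ∈ mActive M m Δ S ↔
      (run M Δ S k).1.IsLoop (visited M Δ S k) ∨ (run M Δ S k).1.IsColoop (visited M Δ S k) := by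
  rw [mem_mActive_iff]
  refine ⟨?_, fun h => ⟨k, hk, rfl, h⟩⟩
  rintro ⟨i, hi, h, hlc⟩
  obtain rfl := visited_injOn hΔ hi hk h.symm
  exact hlc

lemma mActive_congr {S' : Set α} (h : ∀ k ≤ m, run M Δ S k = run M Δ S' k) :
    mActive M m Δ S = mActive M m Δ S' := by
  ext x
  simp only [mem_mActive_iff]
  refine exists_congr fun k => and_congr_right fun hk => ?_
  rw [h k hk.le, visited_congr (h k hk.le)]

lemma run_eq_of_forall_notMem_mActive (hΔ : IsDecisionFunction M m Δ) {S' : Set α}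
    (h : ∀ x ∉ mActive M m Δ S, (x ∈ S ↔ x ∈ S')) : ∀ k ≤ m, run M Δ S k = run M Δ S' k :=
  run_congr fun k hk hl hc => h _ (by rw [visited_mem_mActive_iff hΔ hk]; tauto)

lemma mem_contracted_iff_of_notMem_mActive (hE : M.E.Finite)
    (hΔ : IsDecisionFunction M M.E.ncard Δ) (hS : S ⊆ M.E) {x : α}
    (hx : x ∉ mActive M M.E.ncard Δ S) : x ∈ contracted M Δ S M.E.ncard ↔ x ∈ S := by
  by_cases hxE : x ∈ M.E
  · obtain ⟨k, hk, rfl⟩ := (image_visited_Iio_eq_ground hE hΔ (S := S)).symm ▸ hxE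
    rw [visited_mem_mActive_iff hΔ hk] at hx
    rw [visited_mem_contracted_iff hΔ hk, ContractsAt]
    tauto
  · exact iff_of_false (fun h => hxE (contracted_subset_ground hΔ h)) (fun h => hxE (hS h))

theorem existsUnique_isBase_forall_notMem_mActive (hE : M.E.Finite)
    (hΔ : IsDecisionFunction M M.E.ncard Δ) {A : Set α} (hA : A ⊆ M.E) :
    ∃! B, M.IsBase B ∧ ∀ x ∉ mActive M M.E.ncard Δ B, (x ∈ B ↔ x ∈ A) := by
  have hagree : ∀ x ∉ mActive M M.E.ncard Δ A, x ∈ A ↔ x ∈ contracted M Δ A M.E.ncard :=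
    fun x hx => (mem_contracted_iff_of_notMem_mActive hE hΔ hA hx).symm
  refine ⟨contracted M Δ A M.E.ncard, ⟨contracted_isBase hE hΔ, ?_⟩, ?_⟩
  · rw [← mActive_congr (run_eq_of_forall_notMem_mActive hΔ hagree)]
    exact fun x hx => (hagree x hx).symm
  · rintro B ⟨hB, hBA⟩
    rw [← contracted_eq_of_isBase hE hΔ hB,
      contracted_congr (run_eq_of_forall_notMem_mActive hΔ hBA)]

end Resolution

theorem stmt_19_general {α : Type*} (M : Matroid α) (hE : M.E.Finite)
    (Δ : List Bool → α) (hΔ : IsDecisionFunction M M.E.ncard Δ) :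
    ∀ A : Set α, A ⊆ M.E →
      ∃! B : Set α, M.IsBase B ∧
        B \ (mActive M M.E.ncard Δ B ∩ B) ⊆ A ∧
        A ⊆ B ∪ (mActive M M.E.ncard Δ B \ B) := by
  intro A hA
  simp only [Set.diff_inter_subset_and_subset_union_diff_iff]
  exact Resolution.existsUnique_isBase_forall_notMem_mActive hE hΔ hA

/-- For any matroid `M` on a finite nonempty ground set and any decision function `Δ` for
`M`, the intervals `[B ∖ 𝓘(B), B ∪ 𝓔(B)]` indexed by the bases `B` partition the power set
of the ground set: every `A ⊆ E` lies in exactly one of them. -/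
theorem stmt_19 {α : Type*} (M : Matroid α) (hE : M.E.Finite) (hm : 1 ≤ M.E.ncard)
    (Δ : List Bool → α) (hΔ : IsDecisionFunction M M.E.ncard Δ) :
    ∀ A : Set α, A ⊆ M.E →
      ∃! B : Set α, M.IsBase B ∧
        B \ (mActive M M.E.ncard Δ B ∩ B) ⊆ A ∧
        A ⊆ B ∪ (mActive M M.E.ncard Δ B \ B) :=
  stmt_19_general M hE Δ hΔ
end
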